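/- arXiv:1810.12421 — 13 statements merged into one kernel-verified Lean document; each statement's English description precedes it below -/
import Mathlib

section
/- Let d, N ≥ 1, let x : Fin N → EuclideanSpace ℝ (Fin d) be terminal points and f : Fin N → EuclideanSpace ℝ (Fin d) a loading. Then the following are equivalent: (a) for every u : Fin N → EuclideanSpace ℝ (Fin d) satisfying ⟪u i − u j, x i − x j⟫ ≥ 0 for all i, j, one has ∑ i, ⟪f i, u i⟫ ≥ 0; (b) there exist tension coefficients λ : Fin N → Fin N → ℝ with λ i j = λ j i and λ i j ≥ 0 for all i, j, such that for every i, f i + ∑ j, (λ i j) • (x j − x i) = 0. (Existence of a web under tension supporting the loading, realized by the web connecting the terminal points pairwise.) -/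
/-!
Condition (a) says that `f`, read as a vector of `PiLp 2 (fun _ : Fin N => E)`, has nonnegative inner
product with every `u` in the dual of the cone generated by the bar loads `barLoad x (i, j)`, since
`⟪barLoad x (i, j), u⟫ = ⟪u i - u j, x i - x j⟫`. By Farkas' lemma `f` then lies in that cone, and
a nonnegative combination `∑ μ (i, j) • barLoad x (i, j)` is exactly a loading in equilibrium with
the tension coefficients `μ (i, j) + μ (j, i)`.

Farkas' lemma is hyperplane separation for a closed cone. A finitely generated cone is closed
because, by the conic Carathéodory theorem, it is a finite union of cones over linearly
independent families, i.e. of images of the nonnegative orthant under injective linear maps.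
-/

open scoped InnerProductSpace BigOperators

namespace PointedCone

open Set

variable {R M ι : Type*} [Field R] [LinearOrder R] [IsStrictOrderedRing R] [AddCommGroup M]
  [Module R M] {v : ι → M} {y : M}

theorem mem_hull_image_finset_iff {t : Finset ι} :
    y ∈ hull R (v '' t) ↔ ∃ c : ι → R, (∀ i ∈ t, 0 ≤ c i) ∧ ∑ i ∈ t, c i • v i = y := by
  rw [hull, Submodule.mem_span_image_finset_iff_exists_fun']
  constructor
  · rintro ⟨c, rfl⟩
    exact ⟨fun i => c i, fun i _ => (c i).2, rfl⟩
  · rintro ⟨c, hc, rfl⟩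
    refine ⟨fun i => ⟨max (c i) 0, le_max_right _ _⟩, Finset.sum_congr rfl fun i hi => ?_⟩
    change max (c i) 0 • v i = c i • v i
    rw [max_eq_left (hc i hi)]

theorem mem_hull_range_iff [Fintype ι] :
    y ∈ hull R (range v) ↔ ∃ c : ι → R, (∀ i, 0 ≤ c i) ∧ ∑ i, c i • v i = y := by
  simpa using mem_hull_image_finset_iff (v := v) (y := y) (t := Finset.univ)

theorem exists_mem_hull_image_erase [DecidableEq ι] {t : Finset ι}
    (ht : ¬ LinearIndepOn R v t) (hy : y ∈ hull R (v '' t)) :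
    ∃ j ∈ t, y ∈ hull R (v '' ↑(t.erase j)) := by
  obtain ⟨c, hc, rfl⟩ := mem_hull_image_finset_iff.1 hy
  obtain ⟨g, hg, hpos⟩ :
      ∃ g : ι → R, ∑ i ∈ t, g i • v i = 0 ∧ {i ∈ t | 0 < g i}.Nonempty := by
    obtain ⟨g, hg, i, hi, hgi⟩ := not_linearIndepOn_finset_iff.1 ht
    rcases hgi.lt_or_gt with hneg | hpos
    · refine ⟨-g, ?_, i, Finset.mem_filter.2 ⟨hi, neg_pos.2 hneg⟩⟩
      simp only [Pi.neg_apply, neg_smul, Finset.sum_neg_distrib, hg, neg_zero]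
    · exact ⟨g, hg, i, Finset.mem_filter.2 ⟨hi, hpos⟩⟩
  obtain ⟨j, hj, hmin⟩ := Finset.exists_min_image _ (fun i => c i / g i) hpos
  obtain ⟨hjt, hgj⟩ := Finset.mem_filter.1 hj
  set θ := c j / g j
  have hθ : 0 ≤ θ := div_nonneg (hc j hjt) hgj.le
  refine ⟨j, hjt, mem_hull_image_finset_iff.2 ⟨fun i => c i - θ * g i, fun i hi => ?_, ?_⟩⟩
  · have hit := Finset.mem_of_mem_erase hi
    rcases lt_or_ge 0 (g i) with hgi | hgi
    · have := (le_div_iff₀ hgi).1 (hmin i (Finset.mem_filter.2 ⟨hit, hgi⟩))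
      linarith
    · nlinarith [hc i hit]
  · have hj0 : (c j - θ * g j) • v j = 0 := by
      rw [div_mul_cancel₀ _ hgj.ne', sub_self, zero_smul]
    rw [Finset.sum_erase t (f := fun i => (c i - θ * g i) • v i) hj0]
    simp only [sub_smul, mul_smul, Finset.sum_sub_distrib, ← Finset.smul_sum, hg, smul_zero,
      sub_zero]

theorem exists_linearIndepOn_of_mem_hull_image (t : Finset ι) (hy : y ∈ hull R (v '' t)) :
    ∃ s ⊆ t, LinearIndepOn R v s ∧ y ∈ hull R (v '' s) := by
  classical
  induction t using Finset.strongInduction with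
  | H t ih =>
    by_cases ht : LinearIndepOn R v t
    · exact ⟨t, subset_rfl, ht, hy⟩
    · obtain ⟨j, hj, hy'⟩ := exists_mem_hull_image_erase ht hy
      obtain ⟨s, hs, hsv, hys⟩ := ih _ (Finset.erase_ssubset hj) hy'
      exact ⟨s, hs.trans (Finset.erase_subset j t), hsv, hys⟩


section Topology

variable {M : Type*} [NormedAddCommGroup M] [NormedSpace ℝ M]

theorem isClosed_hull_range_of_linearIndependent {κ : Type*} [Fintype κ] {w : κ → M}
    (hw : LinearIndependent ℝ w) : IsClosed (hull ℝ (range w) : Set M) := by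
  have hcone : (hull ℝ (range w) : Set M) = Fintype.linearCombination ℝ w '' Ici 0 := by
    ext y
    simp [mem_hull_range_iff, Fintype.linearCombination_apply, Pi.le_def]
  have hinj := linearIndependent_iff_injective_fintypeLinearCombination.1 hw
  rw [hcone]
  exact (LinearMap.isClosedEmbedding_of_injective (LinearMap.ker_eq_bot.2 hinj)).isClosedMap _
    isClosed_Ici

theorem isClosed_hull_range {ι : Type*} [Fintype ι] (v : ι → M) :
    IsClosed (hull ℝ (range v) : Set M) := by
  have hcone : (hull ℝ (range v) : Set M) =
      ⋃ s ∈ {s : Finset ι | LinearIndepOn ℝ v s}, hull ℝ (v '' s) := by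
    refine Subset.antisymm (fun y hy => ?_) (iUnion₂_subset fun s _ => ?_)
    · rw [← image_univ, ← Finset.coe_univ] at hy
      obtain ⟨s, -, hs, hys⟩ := exists_linearIndepOn_of_mem_hull_image _ hy
      exact mem_biUnion hs hys
    · exact Submodule.span_mono (image_subset_range v s)
  rw [hcone]
  exact (toFinite _).isClosed_biUnion fun s hs => by
    rw [image_eq_range]
    exact isClosed_hull_range_of_linearIndependent hs

end Topology

theorem mem_hull_range_iff_forall_inner_nonneg {H ι : Type*} [NormedAddCommGroup H]
    [InnerProductSpace ℝ H] [FiniteDimensional ℝ H] [Fintype ι] (v : ι → H) (y : H) :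
    y ∈ hull ℝ (range v) ↔ ∀ u, (∀ i, 0 ≤ ⟪v i, u⟫_ℝ) → 0 ≤ ⟪y, u⟫_ℝ := by
  refine ⟨fun hy u hu => ?_, fun h => ?_⟩
  · obtain ⟨c, hc, rfl⟩ := mem_hull_range_iff.1 hy
    rw [sum_inner]
    exact Finset.sum_nonneg fun i _ => by
      rw [real_inner_smul_left]
      exact mul_nonneg (hc i) (hu i)
  · have := FiniteDimensional.complete ℝ H
    by_contra hy
    let C : ProperCone ℝ H := ⟨hull ℝ (range v), isClosed_hull_range v⟩
    obtain ⟨u, hCu, hyu⟩ := C.hyperplane_separation' hy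
    exact (h u fun i => hCu _ (subset_hull (mem_range_self i))).not_gt hyu

end PointedCone

theorem PiLp.inner_single_left {ι : Type*} [Fintype ι] [DecidableEq ι] {β : ι → Type*}
    [∀ i, NormedAddCommGroup (β i)] [∀ i, InnerProductSpace ℝ (β i)] (i : ι) (a : β i)
    (u : PiLp 2 β) : ⟪PiLp.single 2 i a, u⟫_ℝ = ⟪a, u i⟫_ℝ := by
  rw [PiLp.inner_apply, Fintype.sum_eq_single i fun j hj => by simp [hj]]
  simp

section Web

variable {F ι : Type*} [NormedAddCommGroup F] [InnerProductSpace ℝ F] [Fintype ι] [DecidableEq ι]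

/-- The loading supported by the single bar `[x i, x j]` with unit tension coefficient. -/
noncomputable def barLoad (x : ι → F) (p : ι × ι) : PiLp 2 (fun _ : ι => F) :=
  PiLp.single 2 p.1 (x p.1 - x p.2) + PiLp.single 2 p.2 (x p.2 - x p.1)

theorem inner_barLoad (x : ι → F) (p : ι × ι) (u : PiLp 2 (fun _ : ι => F)) :
    ⟪barLoad x p, u⟫_ℝ = ⟪u p.1 - u p.2, x p.1 - x p.2⟫_ℝ := by
  rw [barLoad, inner_add_left, PiLp.inner_single_left, PiLp.inner_single_left,
    real_inner_comm (x p.1 - x p.2)]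
  simp only [inner_sub_left, inner_sub_right]
  ring

theorem sum_smul_barLoad_apply (x : ι → F) (μ : ι × ι → ℝ) (k : ι) :
    (∑ p, μ p • barLoad x p) k = ∑ j, (μ (k, j) + μ (j, k)) • (x k - x j) := by
  simp [barLoad, WithLp.ofLp_sum, Finset.sum_apply, Pi.single_apply, Fintype.sum_prod_type,
    add_smul, Finset.sum_add_distrib]

theorem toLp_mem_hull_barLoad_iff (x f : ι → F) :
    WithLp.toLp 2 f ∈ PointedCone.hull ℝ (Set.range (barLoad x)) ↔
      ∃ lam : ι → ι → ℝ, (∀ i j, lam i j = lam j i) ∧ (∀ i j, lam i j ≥ 0) ∧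
        ∀ i, f i + ∑ j, lam i j • (x j - x i) = 0 := by
  have hbalance (lam : ι → ι → ℝ) (i : ι) :
      f i + ∑ j, lam i j • (x j - x i) = 0 ↔ ∑ j, lam i j • (x i - x j) = f i := by
    have hneg : ∑ j, lam i j • (x i - x j) = -∑ j, lam i j • (x j - x i) := by
      simp only [← Finset.sum_neg_distrib, ← smul_neg, neg_sub]
    rw [hneg, neg_eq_iff_eq_neg, add_eq_zero_iff_eq_neg']
  simp only [hbalance, PointedCone.mem_hull_range_iff]
  constructor
  · rintro ⟨μ, hμ, hf⟩
    refine ⟨fun i j => μ (i, j) + μ (j, i), fun i j => add_comm _ _,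
      fun i j => add_nonneg (hμ _) (hμ _), fun i => ?_⟩
    rw [← sum_smul_barLoad_apply, hf, PiLp.toLp_apply]
  · rintro ⟨lam, hsymm, hnonneg, hf⟩
    refine ⟨fun p => lam p.1 p.2 / 2, fun p => div_nonneg (hnonneg _ _) zero_le_two, ?_⟩
    ext k
    rw [sum_smul_barLoad_apply, PiLp.toLp_apply, ← hf k]
    refine Finset.sum_congr rfl fun j _ => ?_
    rw [hsymm j k, add_halves]

end Web

theorem web_under_tension_exists_general (d N : ℕ)
    (x f : Fin N → EuclideanSpace ℝ (Fin d)) :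
    (∀ u : Fin N → EuclideanSpace ℝ (Fin d),
        (∀ i j : Fin N, ⟪u i - u j, x i - x j⟫_ℝ ≥ 0) →
        ∑ i, ⟪f i, u i⟫_ℝ ≥ 0)
      ↔
    (∃ lam : Fin N → Fin N → ℝ,
        (∀ i j : Fin N, lam i j = lam j i) ∧
        (∀ i j : Fin N, lam i j ≥ 0) ∧
        (∀ i : Fin N, f i + ∑ j, lam i j • (x j - x i) = 0)) := by
  rw [← toLp_mem_hull_barLoad_iff, PointedCone.mem_hull_range_iff_forall_inner_nonneg]
  simp only [inner_barLoad, Prod.forall]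
  simp only [PiLp.inner_apply, ge_iff_le]
  exact ⟨fun h u hu => h u.ofLp hu, fun h u hu => h (WithLp.toLp 2 u) hu⟩

/-- **Existence of a web under tension** (Theorem 1.1, discrete form).
The loading `f` at terminal points `x` does nonnegative work against every
admissible displacement iff there is a symmetric nonnegative family of tension
coefficients on the bars connecting the terminal points pairwise which
equilibrates the loading. -/
theorem web_under_tension_exists (d N : ℕ) (hd : 1 ≤ d) (hN : 1 ≤ N)
    (x f : Fin N → EuclideanSpace ℝ (Fin d)) :
    (∀ u : Fin N → EuclideanSpace ℝ (Fin d),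
        (∀ i j : Fin N, ⟪u i - u j, x i - x j⟫_ℝ ≥ 0) →
        ∑ i, ⟪f i, u i⟫_ℝ ≥ 0)
      ↔
    (∃ lam : Fin N → Fin N → ℝ,
        (∀ i j : Fin N, lam i j = lam j i) ∧
        (∀ i j : Fin N, lam i j ≥ 0) ∧
        (∀ i : Fin N, f i + ∑ j, lam i j • (x j - x i) = 0)) :=
  web_under_tension_exists_general d N x f
end

section
/- (Interpolation Lemma) Let A be a finite subset of EuclideanSpace ℝ (Fin d) and u : EuclideanSpace ℝ (Fin d) → EuclideanSpace ℝ (Fin d) a map satisfying ⟪u x − u y, x − y⟫ ≥ 0 for all x, y ∈ A. Then for every κ > 0 there exist a constant L ≥ 0 and a map ũ : EuclideanSpace ℝ (Fin d) → EuclideanSpace ℝ (Fin d) that is Lipschitz with constant L, agrees with u on A, and satisfies ⟪ũ x − ũ y, x − y⟫ ≥ −κ * ‖x − y‖² for all x, y ∈ EuclideanSpace ℝ (Fin d). -/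
open scoped InnerProductSpace NNReal
open Set

/-!
Adding `κ • id` to `u` gives a map `v` that is strongly monotone and Lipschitz on `A`, so its
Cayley transform `a + v a ↦ a - v a` is a strict contraction on the finite set `(id + v) '' A`.
Kirszbraun's theorem extends it to a `K`-Lipschitz map `g` of the whole space with `K < 1`. Then
`id + g` is a bi-Lipschitz bijection, and the inverse Cayley transform `V` of `g`, given by
`V ((w + g w) / 2) = (w - g w) / 2`, is a Lipschitz monotone map extending `v`; the extension of
`u` is `V - κ • id`.

Kirszbraun's theorem follows by Zorn's lemma from the one-point extension. For finitely many
constraints this is a minimax argument: for weights `μ` on the simplex, the `μ`-mean of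
`‖q - Q i‖ ^ 2 - K ^ 2 * ‖p - P i‖ ^ 2` is minimised at the barycentre of the `Q i`, where it is
at most `Var_μ Q - K ^ 2 * Var_μ P ≤ 0`. Infinitely many constraints are handled by compactness
of closed balls.
-/

section Variance

variable {E : Type*} [NormedAddCommGroup E] [InnerProductSpace ℝ E] {ι : Type*} [Fintype ι]

def weightedVariance (μ : ι → ℝ) (X : ι → E) : ℝ := ∑ i, μ i * ‖∑ j, μ j • X j - X i‖ ^ 2

theorem sum_mul_norm_sub_sq_eq {μ : ι → ℝ} (hμ : ∑ i, μ i = 1) (X : ι → E) (q : E) :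
    ∑ i, μ i * ‖q - X i‖ ^ 2 = ‖q - ∑ i, μ i • X i‖ ^ 2 + weightedVariance μ X := by
  set b := ∑ i, μ i • X i
  have hcross : ∑ i, μ i * ⟪q - b, b - X i⟫_ℝ = 0 := by
    have : ∑ i, μ i • (b - X i) = 0 := by
      simp only [smul_sub, Finset.sum_sub_distrib, ← Finset.sum_smul, hμ, one_smul, b, sub_self]
    rw [← inner_zero_right (q - b), ← this, inner_sum]
    simp only [real_inner_smul_right]
  have hsplit : ∀ i, μ i * ‖q - X i‖ ^ 2 =
      μ i * ‖q - b‖ ^ 2 + 2 * (μ i * ⟪q - b, b - X i⟫_ℝ) + μ i * ‖b - X i‖ ^ 2 := fun i => by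
    rw [show q - X i = (q - b) + (b - X i) by abel, norm_add_sq_real]; ring
  rw [Finset.sum_congr rfl fun i _ => hsplit i, Finset.sum_add_distrib, Finset.sum_add_distrib,
    ← Finset.sum_mul, ← Finset.mul_sum, hμ, hcross, weightedVariance]
  ring

theorem two_mul_weightedVariance {μ : ι → ℝ} (hμ : ∑ i, μ i = 1) (X : ι → E) :
    2 * weightedVariance μ X = ∑ j, μ j * ∑ i, μ i * ‖X j - X i‖ ^ 2 := by
  simp_rw [sum_mul_norm_sub_sq_eq hμ, mul_add, Finset.sum_add_distrib, ← Finset.sum_mul, hμ,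
    norm_sub_rev (X _)]
  rw [weightedVariance]; ring

variable {F : Type*} [NormedAddCommGroup F] [InnerProductSpace ℝ F]

theorem weightedVariance_le {μ : ι → ℝ} (hμ₀ : ∀ i, 0 ≤ μ i) (hμ : ∑ i, μ i = 1) {K : ℝ≥0}
    {P : ι → E} {Q : ι → F} (h : ∀ i j, ‖Q i - Q j‖ ≤ K * ‖P i - P j‖) :
    weightedVariance μ Q ≤ K ^ 2 * weightedVariance μ P := by
  have hQP : 2 * weightedVariance μ Q ≤ 2 * (K ^ 2 * weightedVariance μ P) := by
    calc 2 * weightedVariance μ Q = ∑ j, μ j * ∑ i, μ i * ‖Q j - Q i‖ ^ 2 :=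
          two_mul_weightedVariance hμ Q
      _ ≤ ∑ j, μ j * ∑ i, μ i * (K * ‖P j - P i‖) ^ 2 := by
          gcongr with j _ i _
          · exact hμ₀ j
          · exact hμ₀ i
          · exact h j i
      _ = 2 * (K ^ 2 * weightedVariance μ P) := by
          rw [mul_left_comm, two_mul_weightedVariance hμ P, Finset.mul_sum]
          simp_rw [Finset.mul_sum]
          exact Finset.sum_congr rfl fun j _ => Finset.sum_congr rfl fun i _ => by ring
  linarith

end Variance

section LipschitzRel

variable {E F : Type*} [NormedAddCommGroup E] [NormedAddCommGroup F]

-- Taking `m.1 = m'.1` shows that such a relation is automatically the graph of a partial map.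
def LipschitzRel (K : ℝ≥0) (S : Set (E × F)) : Prop :=
  ∀ m ∈ S, ∀ m' ∈ S, ‖m.2 - m'.2‖ ≤ K * ‖m.1 - m'.1‖

variable {K : ℝ≥0} {S : Set (E × F)}

theorem LipschitzRel.insert_of_forall (hS : LipschitzRel K S) {p : E} {q : F}
    (hq : ∀ m ∈ S, ‖q - m.2‖ ≤ K * ‖p - m.1‖) : LipschitzRel K (insert (p, q) S) := by
  rintro m (rfl | hm) m' (rfl | hm')
  · simp
  · exact hq m' hm'
  · simpa only [norm_sub_rev] using hq m hm
  · exact hS m hm m' hm'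

theorem LipschitzRel.sUnion_of_isChain {C : Set (Set (E × F))} (hC : ∀ T ∈ C, LipschitzRel K T)
    (hchain : IsChain (· ⊆ ·) C) : LipschitzRel K (⋃₀ C) := by
  rintro m ⟨T, hT, hm⟩ m' ⟨T', hT', hm'⟩
  rcases hchain.total hT hT' with h | h
  · exact hC T' hT' m (h hm) m' hm'
  · exact hC T hT m hm m' (h hm')

end LipschitzRel

section Kirszbraun

variable {E F : Type*} [NormedAddCommGroup E] [InnerProductSpace ℝ E]
  [NormedAddCommGroup F] [InnerProductSpace ℝ F]

theorem exists_forall_norm_sub_le_of_fintype {ι : Type*} [Fintype ι] {K : ℝ≥0} {P : ι → E}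
    {Q : ι → F} (h : ∀ i j, ‖Q i - Q j‖ ≤ K * ‖P i - P j‖) (p : E) :
    ∃ q, ∀ i, ‖q - Q i‖ ≤ K * ‖p - P i‖ := by
  classical
  cases isEmpty_or_nonempty ι
  · exact ⟨0, isEmptyElim⟩
  set R : ι → ℝ := fun i => (K * ‖p - P i‖) ^ 2
  set f : F → (ι → ℝ) → ℝ := fun q μ => ∑ i, μ i * (‖q - Q i‖ ^ 2 - R i)
  set X := convexHull ℝ (range Q)
  set Y := stdSimplex ℝ ι
  have hbar : ∀ μ ∈ Y, ∑ i, μ i • Q i ∈ X := fun μ hμ =>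
    (convex_convexHull ℝ _).sum_mem (fun i _ => hμ.1 i) hμ.2
      fun i _ => subset_convexHull ℝ _ (mem_range_self i)
  have hf_eq : ∀ μ ∈ Y, ∀ q, f q μ =
      ‖q - ∑ i, μ i • Q i‖ ^ 2 + (weightedVariance μ Q - ∑ i, μ i * R i) := by
    intro μ hμ q
    simp only [f, mul_sub, Finset.sum_sub_distrib, sum_mul_norm_sub_sq_eq hμ.2]
    ring
  have hconvex : ∀ μ ∈ Y, ConvexOn ℝ X fun q => f q μ := fun μ hμ =>
    (((convexOn_dist (∑ i, μ i • Q i) (convex_convexHull ℝ _)).pow (fun _ _ => dist_nonneg)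
      2).add_const (weightedVariance μ Q - ∑ i, μ i * R i)).congr fun q _ => by
        simp [hf_eq μ hμ, dist_eq_norm]
  have hconcave : ∀ q, ConcaveOn ℝ Y (f q) := fun q =>
    ⟨convex_stdSimplex ℝ ι, fun μ _ ν _ a b _ _ _ => le_of_eq <| by
      simp only [f, Pi.add_apply, Pi.smul_apply, smul_eq_mul, Finset.mul_sum,
        ← Finset.sum_add_distrib]
      exact Finset.sum_congr rfl fun i _ => by ring⟩
  -- `f q μ` is convex in `q` and affine in `μ`, so Sion's minimax theorem gives a saddle point.
  obtain ⟨q, -, ν, hν, hsaddle⟩ := Sion.exists_isSaddlePointOn (f := f)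
    ⟨_, hbar _ (single_mem_stdSimplex ℝ (Classical.arbitrary ι))⟩ (convex_convexHull ℝ _)
    ((finite_range Q).isCompact_convexHull ℝ)
    (fun μ _ => (by fun_prop : Continuous fun q => f q μ).continuousOn.lowerSemicontinuousOn)
    (fun μ hμ => (hconvex μ hμ).quasiconvexOn) (convex_stdSimplex ℝ ι)
    ⟨_, single_mem_stdSimplex ℝ (Classical.arbitrary ι)⟩ (isCompact_stdSimplex ℝ ι)
    (fun q _ => (by fun_prop : Continuous (f q)).continuousOn.upperSemicontinuousOn)
    (fun q _ => (hconcave q).quasiconcaveOn)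
  refine ⟨q, fun i => ?_⟩
  have hq : ‖q - Q i‖ ^ 2 - R i ≤ f (∑ j, ν j • Q j) ν := by
    simpa [f, Pi.single_apply] using hsaddle _ (hbar ν hν) _ (single_mem_stdSimplex ℝ i)
  have hν0 : f (∑ j, ν j • Q j) ν ≤ 0 := by
    have hR : ∑ j, ν j * R j = K ^ 2 * (‖p - ∑ j, ν j • P j‖ ^ 2 + weightedVariance ν P) := by
      rw [← sum_mul_norm_sub_sq_eq hν.2, Finset.mul_sum]
      exact Finset.sum_congr rfl fun j _ => by ring
    rw [hf_eq ν hν, sub_self, norm_zero, hR]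
    nlinarith [weightedVariance_le hν.1 hν.2 h, sq_nonneg (K : ℝ),
      sq_nonneg ‖p - ∑ j, ν j • P j‖]
  exact (pow_le_pow_iff_left₀ (norm_nonneg _) (by positivity) two_ne_zero).1 (by linarith)

variable {K : ℝ≥0} {S : Set (E × F)}

theorem LipschitzRel.exists_forall_norm_sub_le [ProperSpace F] (hS : LipschitzRel K S) (p : E) :
    ∃ q, ∀ m ∈ S, ‖q - m.2‖ ≤ K * ‖p - m.1‖ := by
  rcases S.eq_empty_or_nonempty with rfl | ⟨m₀, hm₀⟩
  · exact ⟨0, by simp⟩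
  let ball : S → Set F := fun m => Metric.closedBall m.1.2 (K * ‖p - m.1.1‖)
  have hball : ∀ m q, q ∈ ball m ↔ ‖q - m.1.2‖ ≤ K * ‖p - m.1.1‖ := fun m q => by
    simp [ball, dist_eq_norm]
  obtain ⟨q, -, hq⟩ := (isCompact_closedBall m₀.2 (K * ‖p - m₀.1‖)).inter_iInter_nonempty ball
    (fun _ => Metric.isClosed_closedBall) fun u => by
      classical
      obtain ⟨q, hq⟩ := exists_forall_norm_sub_le_of_fintype (ι := ↥(insert (⟨m₀, hm₀⟩ : S) u))
        (P := fun m => m.1.1.1) (Q := fun m => m.1.1.2) (fun i j => hS _ i.1.2 _ j.1.2) p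
      refine ⟨q, (hball ⟨m₀, hm₀⟩ q).2 (hq ⟨_, Finset.mem_insert_self _ _⟩), ?_⟩
      exact mem_iInter₂.2 fun m hm => (hball m q).2 (hq ⟨m, Finset.mem_insert_of_mem hm⟩)
  exact ⟨q, fun m hm => (hball ⟨m, hm⟩ q).1 (mem_iInter.1 hq ⟨m, hm⟩)⟩

theorem LipschitzRel.exists_lipschitzWith [ProperSpace F] (hS : LipschitzRel K S) :
    ∃ g : E → F, LipschitzWith K g ∧ ∀ m ∈ S, g m.1 = m.2 := by
  obtain ⟨M, hSM, hM⟩ := zorn_subset_nonempty {T | LipschitzRel K T}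
    (fun C hC hchain _ => ⟨⋃₀ C, LipschitzRel.sUnion_of_isChain hC hchain,
      fun _ => subset_sUnion_of_mem⟩) S hS
  have htotal : ∀ p, ∃ q, (p, q) ∈ M := fun p => by
    obtain ⟨q, hq⟩ := hM.prop.exists_forall_norm_sub_le p
    exact ⟨q, hM.mem_of_prop_insert (hM.prop.insert_of_forall hq)⟩
  choose g hg using htotal
  refine ⟨g, LipschitzWith.of_dist_le_mul fun x y => ?_, fun m hm => ?_⟩
  · simpa [dist_eq_norm] using hM.prop _ (hg x) _ (hg y)
  · simpa [sub_eq_zero] using hM.prop _ (hg m.1) _ (hSM hm)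

end Kirszbraun

theorem LipschitzWith.surjective_add_self {E : Type*} [NormedAddCommGroup E] [CompleteSpace E]
    {g : E → E} {K : ℝ≥0} (hg : LipschitzWith K g) (hK : K < 1) : Function.Surjective fun w => w + g w := fun z => by
  have hcontr : ContractingWith K fun w => z - g w :=
    ⟨hK, LipschitzWith.of_dist_le_mul fun x y => by
      simpa [dist_eq_norm, norm_sub_rev (g x)] using hg.dist_le_mul x y⟩
  exact ⟨_, (sub_eq_iff_eq_add.1 (ContractingWith.fixedPoint_isFixedPt hcontr)).symm⟩

section Cayley

variable {E : Type*} [NormedAddCommGroup E] [InnerProductSpace ℝ E]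

theorem LipschitzWith.exists_monotone_cayley [CompleteSpace E] {g : E → E} {K : ℝ≥0}
    (hg : LipschitzWith K g) (hK : K < 1) :
    ∃ V : E → E, (∃ L, LipschitzWith L V) ∧ (∀ x y, 0 ≤ ⟪V x - V y, x - y⟫_ℝ) ∧
      ∀ w, V ((2 : ℝ)⁻¹ • (w + g w)) = (2 : ℝ)⁻¹ • (w - g w) := by
  have hsurj := hg.surjective_add_self hK
  have hanti : AntilipschitzWith (1⁻¹ - K)⁻¹ fun w => w + g w :=
    AntilipschitzWith.id.add_lipschitzWith hg (by simpa using hK)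
  set R := Function.surjInv hsurj
  have hR : ∀ w, R (w + g w) = w := fun w => hanti.injective (Function.surjInv_eq hsurj _)
  set V : E → E := fun x => (2 : ℝ)⁻¹ • (R ((2 : ℝ) • x) - g (R ((2 : ℝ) • x)))
  have hV : ∀ w, V ((2 : ℝ)⁻¹ • (w + g w)) = (2 : ℝ)⁻¹ • (w - g w) := fun w => by
    simp only [V, smul_inv_smul₀ (two_ne_zero' ℝ), hR]
  refine ⟨V, ?_, fun x y => ?_, hV⟩
  · have hRlip : LipschitzWith _ R := hanti.to_rightInverse (Function.rightInverse_surjInv hsurj)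
    exact ⟨_, (lipschitzWith_smul _).comp
      ((hRlip.comp (lipschitzWith_smul _)).sub (hg.comp (hRlip.comp (lipschitzWith_smul _))))⟩
  obtain ⟨w, rfl⟩ : ∃ w, (2 : ℝ)⁻¹ • (w + g w) = x :=
    ⟨R ((2 : ℝ) • x), by rw [Function.surjInv_eq hsurj, inv_smul_smul₀ (two_ne_zero' ℝ)]⟩
  obtain ⟨w', rfl⟩ : ∃ w', (2 : ℝ)⁻¹ • (w' + g w') = y :=
    ⟨R ((2 : ℝ) • y), by rw [Function.surjInv_eq hsurj, inv_smul_smul₀ (two_ne_zero' ℝ)]⟩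
  have hgw : ‖g w - g w'‖ ≤ ‖w - w'‖ := by
    simpa [dist_eq_norm] using hg.dist_le_mul w w' |>.trans
      (mul_le_of_le_one_left dist_nonneg hK.le)
  rw [hV, hV, ← smul_sub, ← smul_sub, real_inner_smul_left, real_inner_smul_right]
  have hkey : ⟪w - g w - (w' - g w'), w + g w - (w' + g w')⟫_ℝ =
      ‖w - w'‖ ^ 2 - ‖g w - g w'‖ ^ 2 := by
    rw [show w - g w - (w' - g w') = (w - w') - (g w - g w') by abel,
      show w + g w - (w' + g w') = (w - w') + (g w - g w') by abel,
      inner_sub_left, inner_add_right, inner_add_right, real_inner_self_eq_norm_sq,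
      real_inner_self_eq_norm_sq, real_inner_comm (g w - g w')]
    ring
  rw [hkey]
  have := pow_le_pow_left₀ (norm_nonneg _) hgw 2
  positivity

theorem norm_sub_le_of_inner_ge {s t : E} {κ D : ℝ} (hκ : 0 ≤ κ) (hD : 0 < D)
    (hinner : κ * ‖s‖ ^ 2 ≤ ⟪s, t⟫_ℝ) (hst : ‖s + t‖ ≤ D * ‖s‖) :
    ‖s - t‖ ≤ (1 - 2 * κ / D ^ 2) * ‖s + t‖ := by
  have hpar : ‖s - t‖ ^ 2 = ‖s + t‖ ^ 2 - 4 * ⟪s, t⟫_ℝ := by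
    rw [norm_sub_sq_real, norm_add_sq_real]; ring
  have hγ : 4 * κ / D ^ 2 * ‖s + t‖ ^ 2 ≤ 4 * κ * ‖s‖ ^ 2 := by
    rw [div_mul_eq_mul_div, div_le_iff₀ (by positivity)]
    nlinarith [pow_le_pow_left₀ (norm_nonneg _) hst 2]
  rw [show 2 * κ / D ^ 2 = 4 * κ / D ^ 2 / 2 by ring]
  set γ := 4 * κ / D ^ 2
  have hγ0 : 0 ≤ γ := by positivity
  have hsq : ‖s - t‖ ^ 2 ≤ (1 - γ) * ‖s + t‖ ^ 2 := by nlinarith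
  have hrhs : 0 ≤ (1 - γ / 2) * ‖s + t‖ := by
    rcases (norm_nonneg (s + t)).eq_or_lt with h | h
    · simp [← h]
    · have : 0 ≤ 1 - γ := by nlinarith [sq_nonneg ‖s - t‖, pow_pos h 2]
      nlinarith
  refine (pow_le_pow_iff_left₀ (norm_nonneg _) hrhs two_ne_zero).1 ?_
  nlinarith [sq_nonneg (γ * ‖s + t‖)]

theorem lipschitzRel_cayley {A : Set E} {u : E → E} {M : ℝ≥0} (hu : LipschitzOnWith M u A)
    (hmono : ∀ x ∈ A, ∀ y ∈ A, 0 ≤ ⟪u x - u y, x - y⟫_ℝ) {κ : ℝ} (hκ : 0 ≤ κ) :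
    LipschitzRel (1 - 2 * κ / (1 + M + κ) ^ 2).toNNReal
      ((fun a => (a + (u a + κ • a), a - (u a + κ • a))) '' A) := by
  rintro _ ⟨a, ha, rfl⟩ _ ⟨b, hb, rfl⟩
  have hu_ab : ‖u a - u b‖ ≤ M * ‖a - b‖ := by
    simpa [dist_eq_norm] using hu.dist_le_mul a ha b hb
  have hinner : κ * ‖a - b‖ ^ 2 ≤ ⟪a - b, u a - u b + κ • (a - b)⟫_ℝ := by
    rw [inner_add_right, real_inner_smul_right, real_inner_self_eq_norm_sq, real_inner_comm]
    linarith [hmono a ha b hb]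
  have hsum : ‖a - b + (u a - u b + κ • (a - b))‖ ≤ (1 + M + κ) * ‖a - b‖ := by
    rw [show a - b + (u a - u b + κ • (a - b)) = (1 + κ) • (a - b) + (u a - u b) by module]
    calc _ ≤ ‖(1 + κ) • (a - b)‖ + ‖u a - u b‖ := norm_add_le _ _
      _ ≤ (1 + κ) * ‖a - b‖ + M * ‖a - b‖ := by
        rw [norm_smul, Real.norm_of_nonneg (by positivity)]; gcongr
      _ = (1 + M + κ) * ‖a - b‖ := by ring
  have := norm_sub_le_of_inner_ge hκ (by positivity) hinner hsum
  dsimp only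
  rw [show a - (u a + κ • a) - (b - (u b + κ • b)) = a - b - (u a - u b + κ • (a - b)) by module,
    show a + (u a + κ • a) - (b + (u b + κ • b)) = a - b + (u a - u b + κ • (a - b)) by module]
  exact this.trans (mul_le_mul_of_nonneg_right (Real.le_coe_toNNReal _) (norm_nonneg _))

end Cayley

theorem Finset.exists_lipschitzOnWith {α β : Type*} [MetricSpace α] [PseudoMetricSpace β]
    (A : Finset α) (f : α → β) : ∃ K, LipschitzOnWith K f A := by
  refine ⟨A.sup fun a => A.sup fun b => nndist (f a) (f b) / nndist a b,
    LipschitzOnWith.of_dist_le_mul fun a ha b hb => ?_⟩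
  rcases eq_or_ne a b with rfl | hab
  · simp
  · have hpos : 0 < nndist a b := by rw [← NNReal.coe_pos, coe_nndist]; exact dist_pos.2 hab
    rw [← coe_nndist, ← coe_nndist, ← NNReal.coe_mul, NNReal.coe_le_coe, ← div_le_iff₀ hpos]
    exact (Finset.le_sup (f := fun b => nndist (f a) (f b) / nndist a b) hb).trans
      (Finset.le_sup (f := fun a => A.sup fun b => nndist (f a) (f b) / nndist a b) ha)

/-- **Interpolation Lemma**: a map that is monotone on a finite set `A` admits,
for every `κ > 0`, a Lipschitz extension to the whole space that is
`κ`-almost monotone. -/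
theorem interpolation_lemma (d : ℕ) (A : Finset (EuclideanSpace ℝ (Fin d)))
    (u : EuclideanSpace ℝ (Fin d) → EuclideanSpace ℝ (Fin d))
    (hmono : ∀ x ∈ A, ∀ y ∈ A, ⟪u x - u y, x - y⟫_ℝ ≥ 0)
    (κ : ℝ) (hκ : 0 < κ) :
    ∃ (L : ℝ), 0 ≤ L ∧
      ∃ ut : EuclideanSpace ℝ (Fin d) → EuclideanSpace ℝ (Fin d),
        LipschitzWith (Real.toNNReal L) ut ∧
        (∀ x ∈ A, ut x = u x) ∧
        (∀ x y : EuclideanSpace ℝ (Fin d),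
          ⟪ut x - ut y, x - y⟫_ℝ ≥ -κ * ‖x - y‖ ^ 2) := by
  obtain ⟨M, hM⟩ := A.exists_lipschitzOnWith u
  obtain ⟨g, hg, hgA⟩ := (lipschitzRel_cayley hM hmono hκ.le).exists_lipschitzWith
  have hc : (1 - 2 * κ / (1 + M + κ) ^ 2).toNNReal < 1 :=
    Real.toNNReal_lt_one.2 (sub_lt_self _ (by positivity))
  obtain ⟨V, ⟨LV, hV⟩, hVmono, hVg⟩ := hg.exists_monotone_cayley hc
  refine ⟨(LV + ‖κ‖₊ : ℝ≥0), NNReal.coe_nonneg _, fun x => V x - κ • x,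
    by rw [Real.toNNReal_coe]; exact hV.sub (lipschitzWith_smul κ), fun a ha => ?_, fun x y => ?_⟩
  · have hVa := hVg (a + (u a + κ • a))
    rw [hgA _ (mem_image_of_mem _ ha)] at hVa
    rw [show a + (u a + κ • a) + (a - (u a + κ • a)) = (2 : ℝ) • a by module,
      show a + (u a + κ • a) - (a - (u a + κ • a)) = (2 : ℝ) • (u a + κ • a) by module,
      inv_smul_smul₀ (two_ne_zero' ℝ), inv_smul_smul₀ (two_ne_zero' ℝ)] at hVa
    simp [hVa]
  · rw [show V x - κ • x - (V y - κ • y) = V x - V y - κ • (x - y) by module, inner_sub_left,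
      real_inner_smul_left, real_inner_self_eq_norm_sq]
    linarith [hVmono x y]
end

section
/- Let A be a finite subset of EuclideanSpace ℝ (Fin d), u : EuclideanSpace ℝ (Fin d) → EuclideanSpace ℝ (Fin d), M > 0 with ‖x‖ ≤ M and ‖u x‖ ≤ M for all x ∈ A, and δ > 0 with ‖x − y‖ ≥ δ for all distinct x, y ∈ A. Assume ⟪u x − u y, x − y⟫ ≥ 0 for all x, y ∈ A. Set λ = 8 * M² / δ² and let s > 0 satisfy λ * s ≤ 1. Then the map φ defined by φ z = (1 − λ * s²) • z − s • (u z) satisfies ‖φ x − φ y‖ ≤ ‖x − y‖ for all x, y ∈ A. -/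
open scoped InnerProductSpace

/-- The key contraction estimate in the proof of the Interpolation Lemma:
the map `z ↦ (1 - λ s²) z - s u(z)` with `λ = 8 M² / δ²` is `1`-Lipschitz on a
finite, `δ`-separated, `M`-bounded set on which `u` is monotone and bounded. -/
theorem contraction_estimate (d : ℕ) (A : Finset (EuclideanSpace ℝ (Fin d)))
    (u : EuclideanSpace ℝ (Fin d) → EuclideanSpace ℝ (Fin d))
    (M : ℝ) (hM : 0 < M)
    (hbx : ∀ x ∈ A, ‖x‖ ≤ M) (hbu : ∀ x ∈ A, ‖u x‖ ≤ M)
    (δ : ℝ) (hδ : 0 < δ)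
    (hsep : ∀ x ∈ A, ∀ y ∈ A, x ≠ y → ‖x - y‖ ≥ δ)
    (hmono : ∀ x ∈ A, ∀ y ∈ A, ⟪u x - u y, x - y⟫_ℝ ≥ 0)
    (s : ℝ) (hs : 0 < s) (hls : (8 * M ^ 2 / δ ^ 2) * s ≤ 1) :
    ∀ x ∈ A, ∀ y ∈ A,
      ‖((1 - (8 * M ^ 2 / δ ^ 2) * s ^ 2) • x - s • u x)
        - ((1 - (8 * M ^ 2 / δ ^ 2) * s ^ 2) • y - s • u y)‖ ≤ ‖x - y‖ := by
  intro x hx y hy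
  by_cases hxy : x = y
  · simp [hxy]
  set l : ℝ := 8 * M ^ 2 / δ ^ 2 with hl
  have hl0 : 0 < l := by positivity
  have hδxy : ‖x - y‖ ≥ δ := hsep x hx y hy hxy
  have hb : ‖x - y‖ ≤ 2 * M := (norm_sub_le x y).trans (by linarith [hbx x hx, hbx y hy])
  have hbu' : ‖u x - u y‖ ≤ 2 * M :=
    (norm_sub_le _ _).trans (by linarith [hbu x hx, hbu y hy])
  have hδ2M : δ ≤ 2 * M := hδxy.trans hb
  have hl2 : 2 ≤ l := by
    rw [hl, le_div_iff₀ (by positivity)]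
    nlinarith
  have hs2 : s ≤ 1 / 2 := by
    nlinarith [mul_le_mul_of_nonneg_right hl2 hs.le]
  have hc0 : 0 ≤ 1 - l * s ^ 2 := by nlinarith
  have hc1 : l * s ^ 2 ≤ 1 := by nlinarith
  have hmono' : (0:ℝ) ≤ ⟪x - y, u x - u y⟫_ℝ := by
    have := hmono x hx y hy
    rwa [real_inner_comm] at this
  have h1 : ((1 - l * s ^ 2) • x - s • u x) - ((1 - l * s ^ 2) • y - s • u y)
      = (1 - l * s ^ 2) • (x - y) - s • (u x - u y) := by
    simp only [smul_sub]; abel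
  have expand : ‖((1 - l * s ^ 2) • x - s • u x) - ((1 - l * s ^ 2) • y - s • u y)‖ ^ 2
      = (1 - l * s ^ 2) ^ 2 * ‖x - y‖ ^ 2
        - 2 * ((1 - l * s ^ 2) * s) * ⟪x - y, u x - u y⟫_ℝ
        + s ^ 2 * ‖u x - u y‖ ^ 2 := by
    rw [h1, @norm_sub_sq_real, real_inner_smul_left, real_inner_smul_right,
      norm_smul, norm_smul]
    rw [Real.norm_eq_abs, Real.norm_eq_abs]
    rw [mul_pow, mul_pow, sq_abs, sq_abs]
    ring
  have key : ‖((1 - l * s ^ 2) • x - s • u x) - ((1 - l * s ^ 2) • y - s • u y)‖ ^ 2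
      ≤ ‖x - y‖ ^ 2 := by
    rw [expand]
    have hT : δ ^ 2 ≤ ‖x - y‖ ^ 2 := by nlinarith [norm_nonneg (x - y)]
    have hU : ‖u x - u y‖ ^ 2 ≤ 4 * M ^ 2 := by nlinarith [norm_nonneg (u x - u y)]
    have hlδ : l * δ ^ 2 = 8 * M ^ 2 := by
      rw [hl]; field_simp
    have hc2 : (1 - l * s ^ 2) ^ 2 * ‖x - y‖ ^ 2 ≤ (1 - l * s ^ 2) * ‖x - y‖ ^ 2 :=
      mul_le_mul_of_nonneg_right (by nlinarith [mul_nonneg hc0 (mul_nonneg hl0.le (sq_nonneg s))]) (sq_nonneg _)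
    have hE : (1 - l * s ^ 2) * ‖x - y‖ ^ 2 = ‖x - y‖ ^ 2 - l * s ^ 2 * ‖x - y‖ ^ 2 := by ring
    have hB : l * s ^ 2 * δ ^ 2 ≤ l * s ^ 2 * ‖x - y‖ ^ 2 :=
      mul_le_mul_of_nonneg_left hT (by positivity)
    have hD : l * s ^ 2 * δ ^ 2 = 8 * M ^ 2 * s ^ 2 := by
      rw [hl]; field_simp
    have hC : s ^ 2 * ‖u x - u y‖ ^ 2 ≤ s ^ 2 * (4 * M ^ 2) :=
      mul_le_mul_of_nonneg_left hU (sq_nonneg s)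
    have hP : 0 ≤ 2 * ((1 - l * s ^ 2) * s) * ⟪x - y, u x - u y⟫_ℝ := by positivity
    have hF : s ^ 2 * (4 * M ^ 2) + 4 * (M * s) ^ 2 = 8 * M ^ 2 * s ^ 2 := by ring
    linarith [sq_nonneg (M * s)]
  have := Real.sqrt_le_sqrt key
  rwa [Real.sqrt_sq (norm_nonneg _), Real.sqrt_sq (norm_nonneg _)] at this
end

section
/- Let S : EuclideanSpace ℝ (Fin d) → Matrix (Fin d) (Fin d) ℝ be a continuously differentiable matrix field whose value at every point is symmetric and positive semidefinite, with every entry Lebesgue-integrable over EuclideanSpace ℝ (Fin d). Let m be a unit vector, a ∈ ℝ, and suppose that the divergence of S vanishes at every point of the open half-space {x : ⟪x, m⟫ > a}, i.e., for every such x and every i, ∑ j, (fderiv ℝ (fun y => S y i j) x) (EuclideanSpace.single j 1) = 0. Then for every x with ⟪x, m⟫ = a, the vector S x applied to m is zero, i.e., ∑ j, (S x) i j * m j = 0 for every i. -/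
open scoped InnerProductSpace BigOperators
open MeasureTheory Set ENNReal

lemma exists_gt_of_lintegral_lt_top {h : ℝ → ℝ≥0∞} (hm : Measurable h)
    (hfin : ∫⁻ t, h t ≠ ⊤) {ε : ℝ≥0∞} (hε : 0 < ε) (M : ℝ) :
    ∃ t, M < t ∧ h t ≤ ε := by
  by_contra hc
  push_neg at hc
  have h1 : ∫⁻ t in Ioi M, ε ≤ ∫⁻ t in Ioi M, h t :=
    setLIntegral_mono hm fun t ht => (hc t ht).le
  rw [setLIntegral_const, Real.volume_Ioi, ENNReal.mul_top hε.ne'] at h1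
  exact hfin (top_le_iff.mp (h1.trans (setLIntegral_le_lintegral _ _)))

lemma fubini_insertNth {n : ℕ} (i : Fin (n + 1))
    (g : (Fin (n + 1) → ℝ) → ℝ≥0∞) (hg : Measurable g) :
    ∫⁻ x, g x = ∫⁻ t : ℝ, ∫⁻ y : Fin n → ℝ, g (i.insertNth t y) := by
  have hP := (MeasureTheory.volume_preserving_piFinSuccAbove (fun _ : Fin (n+1) => ℝ) i).symm
  have := hP.lintegral_comp hg
  rw [← this, MeasureTheory.Measure.volume_eq_prod, MeasureTheory.lintegral_prod]
  · rfl
  · exact (hg.comp (MeasurableEquiv.measurable _)).aemeasurable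

lemma core_halfspace (n : ℕ) (V : (Fin (n+1) → ℝ) → (Fin (n+1) → ℝ))
    (hC1 : ∀ i, ContDiff ℝ 1 (fun y => V y i))
    (hInt : ∀ i, Integrable (fun y => V y i))
    (hpos : ∀ x, 0 ≤ V x (Fin.last n))
    (a : ℝ)
    (hdiv : ∀ x, a < x (Fin.last n) →
      ∑ i, fderiv ℝ (fun y => V y i) x (Pi.single i 1) = 0) :
    ∀ x, a < x (Fin.last n) → V x (Fin.last n) = 0 := by
  intro x₀ hx₀
  by_contra hne
  have hcont : ∀ i, Continuous fun y => V y i := fun i => (hC1 i).continuous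
  set l := Fin.last n with hl
  have hε : 0 < V x₀ l := lt_of_le_of_ne (hpos x₀) (Ne.symm hne)
  set ε := V x₀ l with hεdef
  -- continuity ball
  obtain ⟨δ, hδ0, hδ⟩ : ∃ δ > 0, ∀ y, dist y x₀ ≤ δ → ε/2 ≤ V y l := by
    rcases Metric.continuousAt_iff.mp ((hcont l).continuousAt (x := x₀)) (ε/2)
      (by positivity) with ⟨δ', hδ'0, hδ'⟩
    refine ⟨δ'/2, by positivity, fun y hy => ?_⟩
    have h2 := hδ' (lt_of_le_of_lt hy (by linarith))
    rw [Real.dist_eq] at h2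
    have := abs_lt.mp h2
    linarith [this.1]
  set c := ε/2 * (2*δ)^n with hcdef
  have hc : 0 < c := by positivity
  -- slice integrals
  set G : Fin (n+1) → ℝ → ℝ≥0∞ :=
    fun i s => ∫⁻ y : Fin n → ℝ, ENNReal.ofReal |V (i.insertNth s y) i| with hGdef
  have hVmeas : ∀ i : Fin (n+1), Measurable fun p : ℝ × (Fin n → ℝ) =>
      ENNReal.ofReal |V (i.insertNth p.1 p.2) i| := by
    intro i
    have h1 : Measurable fun p : ℝ × (Fin n → ℝ) => (i.insertNth p.1 p.2 : Fin (n+1) → ℝ) := by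
      refine measurable_pi_iff.2 fun k => ?_
      by_cases hk : k = i
      · subst hk; simpa using (measurable_fst : Measurable fun p : ℝ × (Fin n → ℝ) => p.1)
      · obtain ⟨j, rfl⟩ := Fin.exists_succAbove_eq (Ne.symm (Ne.symm hk))
        simpa [Function.comp_def] using (measurable_pi_apply j).comp (measurable_snd :
          Measurable fun p : ℝ × (Fin n → ℝ) => p.2)
    exact ENNReal.measurable_ofReal.comp (((hcont i).measurable.comp h1).abs)
  have hGmeas : ∀ i, Measurable (G i) := fun i => (hVmeas i).lintegral_prod_right'
  have hGfin : ∀ i, ∫⁻ s, G i s ≠ ⊤ := by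
    intro i
    have h1 : ∫⁻ x, ENNReal.ofReal |V x i| = ∫⁻ s, G i s :=
      fubini_insertNth i _ (ENNReal.measurable_ofReal.comp ((hcont i).measurable.abs))
    rw [← h1]
    have h2 := (hInt i).2
    rw [HasFiniteIntegral] at h2
    refine ne_of_lt (lt_of_le_of_lt (le_of_eq ?_) h2)
    congr 1
    ext x
    exact (Real.enorm_eq_ofReal_abs _).symm
  -- choice of R
  set K : ℝ → ℝ≥0∞ := fun R => ∑ i, (G i (x₀ i + R) + G i (x₀ i - R)) with hKdef
  have hKmeas : Measurable K := by
    apply Finset.measurable_sum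
    intro i _
    exact ((hGmeas i).comp (measurable_const.add measurable_id)).add
      ((hGmeas i).comp (measurable_const.sub measurable_id))
  have hmeasK : ∀ i : Fin (n+1), Measurable fun R : ℝ => G i (x₀ i + R) + G i (x₀ i - R) :=
    fun i => ((hGmeas i).comp (measurable_const.add measurable_id)).add
      ((hGmeas i).comp (measurable_const.sub measurable_id))
  have hadd : ∀ i : Fin (n+1), (∫⁻ R, (G i (x₀ i + R) + G i (x₀ i - R))) ≤ 2 * ∫⁻ s, G i s := by
    intro i
    have hm1 : Measurable fun R : ℝ => G i (x₀ i + R) :=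
      (hGmeas i).comp (measurable_const.add measurable_id)
    rw [lintegral_add_left hm1]
    have e1 : ∫⁻ R, G i (x₀ i + R) = ∫⁻ s, G i s :=
      (measurePreserving_add_left volume (x₀ i)).lintegral_comp (hGmeas i)
    have e2 : ∫⁻ R, G i (x₀ i - R) = ∫⁻ s, G i s := by
      have h3 : MeasurePreserving (fun R : ℝ => x₀ i - R) volume volume := by
        have := (measurePreserving_add_left (volume : Measure ℝ) (x₀ i)).comp
          (Measure.measurePreserving_neg (volume : Measure ℝ))
        simpa [Function.comp_def, sub_eq_add_neg] using this
      exact h3.lintegral_comp (hGmeas i)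
    rw [e1, e2, two_mul]
  have hKfin : ∫⁻ R, K R ≠ ⊤ := by
    have hle : (∫⁻ R, K R) ≤ ∑ i : Fin (n+1), 2 * ∫⁻ s, G i s := by
      rw [show (fun R => K R) = fun R => ∑ i, (G i (x₀ i + R) + G i (x₀ i - R)) from rfl,
        lintegral_finset_sum _ (fun i _ => hmeasK i)]
      exact Finset.sum_le_sum fun i _ => hadd i
    refine ne_of_lt (lt_of_le_of_lt hle ?_)
    refine ENNReal.sum_lt_top.mpr fun i _ => ?_
    exact ENNReal.mul_lt_top (by simp) (hGfin i).lt_top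
  obtain ⟨R, hRδ, hRK⟩ := exists_gt_of_lintegral_lt_top hKmeas hKfin
    (ε := ENNReal.ofReal (c/3)) (by simp [ENNReal.ofReal_pos]; positivity) δ
  have hR0 : 0 < R := hδ0.trans hRδ
  -- choice of T
  obtain ⟨T, hT, hTG⟩ := exists_gt_of_lintegral_lt_top (hGmeas l) (hGfin l)
    (ε := ENNReal.ofReal (c/3)) (by simp [ENNReal.ofReal_pos]; positivity) (x₀ l)
  classical
  set A : Fin (n+1) → ℝ := fun i => if i = l then x₀ l else x₀ i - R with hAdef
  set B : Fin (n+1) → ℝ := fun i => if i = l then T else x₀ i + R with hBdef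
  have hAB : A ≤ B := by
    intro i
    by_cases hi : i = l
    · simpa [hAdef, hBdef, hi] using hT.le
    · simp only [hAdef, hBdef, if_neg hi]
      linarith
  have hAl : A l = x₀ l := by simp [hAdef]
  have hBl : B l = T := by simp [hBdef]
  have hAne : ∀ i : Fin (n+1), i ≠ l → A i = x₀ i - R := fun i hi => by simp [hAdef, hi]
  have hBne : ∀ i : Fin (n+1), i ≠ l → B i = x₀ i + R := fun i hi => by simp [hBdef, hi]
  have hzero : Set.EqOn (fun x => ∑ i, (fderiv ℝ (fun y => V y i) x) (Pi.single i 1))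
      (fun _ => (0:ℝ)) (Icc A B) := by
    intro x hx
    refine hdiv x ?_
    have := hx.1 l
    rw [hAl] at this
    exact lt_of_lt_of_le hx₀ this
  have Hi : IntegrableOn (fun x => ∑ i, (fderiv ℝ (fun y => V y i) x) (Pi.single i 1))
      (Icc A B) := by
    refine (integrableOn_congr_fun hzero measurableSet_Icc).mpr ?_
    exact integrableOn_const isCompact_Icc.measure_lt_top.ne
  have hDT := MeasureTheory.integral_divergence_of_hasFDerivAt_off_countable' A B hAB
    (fun i x => V x i) (fun i x => fderiv ℝ (fun y => V y i) x) ∅ Set.countable_empty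
    (fun i => (hcont i).continuousOn)
    (fun x _ i => (((hC1 i).differentiable one_ne_zero) x).hasFDerivAt) Hi
  have hLHS : (∫ x in Icc A B, ∑ i, (fderiv ℝ (fun y => V y i) x) (Pi.single i 1)) = 0 := by
    rw [setIntegral_congr_fun measurableSet_Icc hzero]
    simp
  set Fr : Fin (n+1) → ℝ := fun i =>
    ∫ y in Icc (A ∘ i.succAbove) (B ∘ i.succAbove), V (i.insertNth (B i) y) i with hFrdef
  set Ba : Fin (n+1) → ℝ := fun i =>
    ∫ y in Icc (A ∘ i.succAbove) (B ∘ i.succAbove), V (i.insertNth (A i) y) i with hBadef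
  have hsum : 0 = ∑ i, (Fr i - Ba i) := by rw [← hDT, hLHS]
  -- generic face bound
  have hbound : ∀ (i : Fin (n+1)) (t : ℝ), G i t ≠ ⊤ →
      |∫ y in Icc (A ∘ i.succAbove) (B ∘ i.succAbove), V (i.insertNth t y) i| ≤ (G i t).toReal := by
    intro i t hfin
    have hgcont : Continuous fun y : Fin n → ℝ => V (i.insertNth t y) i :=
      (hcont i).comp (continuous_const.finInsertNth i continuous_id)
    calc |∫ y in Icc (A ∘ i.succAbove) (B ∘ i.succAbove), V (i.insertNth t y) i|
        ≤ ∫ y in Icc (A ∘ i.succAbove) (B ∘ i.succAbove), |V (i.insertNth t y) i| :=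
          by simpa [Real.norm_eq_abs] using
            norm_integral_le_integral_norm (μ := volume.restrict
              (Icc (A ∘ i.succAbove) (B ∘ i.succAbove)))
              (fun y => V (i.insertNth t y) i)
      _ = (∫⁻ y in Icc (A ∘ i.succAbove) (B ∘ i.succAbove),
            ENNReal.ofReal |V (i.insertNth t y) i|).toReal := by
          rw [integral_eq_lintegral_of_nonneg_ae (ae_of_all _ fun y => abs_nonneg _)
            hgcont.abs.aestronglyMeasurable.restrict]
      _ ≤ (G i t).toReal := by
          refine ENNReal.toReal_mono hfin ?_
          exact setLIntegral_le_lintegral _ _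
  have hKR : ∀ i : Fin (n+1), G i (x₀ i + R) + G i (x₀ i - R) ≤ ENNReal.ofReal (c/3) :=
    fun i => le_trans (Finset.single_le_sum
      (f := fun i => G i (x₀ i + R) + G i (x₀ i - R)) (fun _ _ => zero_le)
      (Finset.mem_univ i)) hRK
  have hGRfin : ∀ i : Fin (n+1), G i (x₀ i + R) ≠ ⊤ ∧ G i (x₀ i - R) ≠ ⊤ := by
    intro i
    constructor
    · exact ne_top_of_le_ne_top ofReal_ne_top (le_trans le_self_add (hKR i))
    · exact ne_top_of_le_ne_top ofReal_ne_top (le_trans le_add_self (hKR i))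
  -- side bound
  have hside : |∑ i ∈ Finset.univ.erase l, (Fr i - Ba i)| ≤ c/3 := by
    calc |∑ i ∈ Finset.univ.erase l, (Fr i - Ba i)|
        ≤ ∑ i ∈ Finset.univ.erase l, |Fr i - Ba i| := Finset.abs_sum_le_sum_abs _ _
      _ ≤ ∑ i ∈ Finset.univ.erase l, ((G i (x₀ i + R)).toReal + (G i (x₀ i - R)).toReal) := by
          refine Finset.sum_le_sum fun i hi => ?_
          have hil : i ≠ l := Finset.ne_of_mem_erase hi
          have h1 := hbound i (B i) (by rw [hBne i hil]; exact (hGRfin i).1)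
          have h2 := hbound i (A i) (by rw [hAne i hil]; exact (hGRfin i).2)
          rw [hBne i hil] at h1
          rw [hAne i hil] at h2
          calc |Fr i - Ba i| ≤ |Fr i| + |Ba i| := abs_sub _ _
            _ ≤ (G i (x₀ i + R)).toReal + (G i (x₀ i - R)).toReal := by
                refine add_le_add ?_ ?_
                · simpa [hFrdef, hBne i hil] using h1
                · simpa [hBadef, hAne i hil] using h2
      _ ≤ ∑ i : Fin (n+1), ((G i (x₀ i + R)).toReal + (G i (x₀ i - R)).toReal) := by
          refine Finset.sum_le_sum_of_subset_of_nonneg (Finset.erase_subset _ _) ?_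
          intro i _ _
          positivity
      _ = (K R).toReal := by
          rw [hKdef]
          rw [ENNReal.toReal_sum (fun i _ => ?_)]
          · refine Finset.sum_congr rfl fun i _ => ?_
            rw [ENNReal.toReal_add (hGRfin i).1 (hGRfin i).2]
          · exact ENNReal.add_ne_top.mpr ⟨(hGRfin i).1, (hGRfin i).2⟩
      _ ≤ c/3 := by
          have := ENNReal.toReal_mono ofReal_ne_top hRK
          rwa [ENNReal.toReal_ofReal (by positivity)] at this
  -- top bound
  have htop : Fr l ≤ c/3 := by
    have h1 := hbound l (B l) (by rw [hBl]; exact ne_top_of_le_ne_top ofReal_ne_top hTG)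
    rw [hBl] at h1
    have h2 : (G l T).toReal ≤ c/3 := by
      have := ENNReal.toReal_mono ofReal_ne_top hTG
      rwa [ENNReal.toReal_ofReal (by positivity)] at this
    calc Fr l ≤ |Fr l| := le_abs_self _
      _ ≤ (G l T).toReal := by simpa [hFrdef, hBl] using h1
      _ ≤ c/3 := h2
  -- bottom bound
  have hbot : c ≤ Ba l := by
    have hAsA : (A ∘ l.succAbove) = fun j => x₀ (l.succAbove j) - R := by
      funext j; simp [hAdef, Fin.succAbove_ne l j]
    have hBsA : (B ∘ l.succAbove) = fun j => x₀ (l.succAbove j) + R := by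
      funext j; simp [hBdef, Fin.succAbove_ne l j]
    set g₀ : (Fin n → ℝ) → ℝ := fun y => V (l.insertNth (x₀ l) y) l with hg₀def
    have hg₀cont : Continuous g₀ :=
      (hcont l).comp (continuous_const.finInsertNth l continuous_id)
    have hg₀pos : ∀ y, 0 ≤ g₀ y := fun y => hpos _
    set P : Set (Fin n → ℝ) :=
      Icc (fun j => x₀ (l.succAbove j) - δ) (fun j => x₀ (l.succAbove j) + δ) with hPdef
    have hPsub : P ⊆ Icc (A ∘ l.succAbove) (B ∘ l.succAbove) := by
      rw [hAsA, hBsA]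
      refine Icc_subset_Icc ?_ ?_ <;> intro j <;> simp <;> linarith [hRδ.le]
    have hIntFace : IntegrableOn g₀ (Icc (A ∘ l.succAbove) (B ∘ l.succAbove)) :=
      hg₀cont.continuousOn.integrableOn_compact isCompact_Icc
    have hdistP : ∀ y ∈ P, ε/2 ≤ g₀ y := by
      intro y hy
      refine hδ _ ?_
      refine (dist_pi_le_iff hδ0.le).2 fun k => ?_
      by_cases hk : k = l
      · subst hk
        rw [Fin.insertNth_apply_same]
        simp [hδ0.le]
      · obtain ⟨j, rfl⟩ := Fin.exists_succAbove_eq hk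
        rw [Fin.insertNth_apply_succAbove]
        rw [Set.mem_Icc] at hy
        have h1 := hy.1 j
        have h2 := hy.2 j
        rw [Real.dist_eq, abs_le]
        constructor <;> simp at h1 h2 ⊢ <;> linarith
    have hvol : (volume P).toReal = (2*δ)^n := by
      rw [hPdef, Real.volume_Icc_pi_toReal (fun j => by simp; linarith)]
      simp [Finset.prod_const]
      ring_nf
    have hstep2 : ε/2 * (2*δ)^n ≤ ∫ y in P, g₀ y := by
      have hci : IntegrableOn (fun _ : Fin n → ℝ => ε/2) P :=
        integrableOn_const isCompact_Icc.measure_lt_top.ne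
      have := setIntegral_mono_on hci (hIntFace.mono_set hPsub) measurableSet_Icc hdistP
      rwa [setIntegral_const, measureReal_def, hvol, smul_eq_mul, mul_comm] at this
    have hstep1 : (∫ y in P, g₀ y) ≤ ∫ y in Icc (A ∘ l.succAbove) (B ∘ l.succAbove), g₀ y :=
      setIntegral_mono_set hIntFace (ae_of_all _ hg₀pos) (HasSubset.Subset.eventuallyLE hPsub)
    have : Ba l = ∫ y in Icc (A ∘ l.succAbove) (B ∘ l.succAbove), g₀ y := by
      rw [hBadef]
      simp only [hAl]
      rfl
    rw [this, hcdef]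
    exact le_trans hstep2 hstep1
  -- conclusion
  have hsplit : ∑ i, (Fr i - Ba i)
      = (Fr l - Ba l) + ∑ i ∈ Finset.univ.erase l, (Fr i - Ba i) :=
    (Finset.add_sum_erase _ _ (Finset.mem_univ l)).symm
  rw [hsplit] at hsum
  have habs := abs_le.mp hside
  linarith [habs.1, habs.2]

lemma core_boundary (n : ℕ) (V : (Fin (n+1) → ℝ) → (Fin (n+1) → ℝ))
    (hC1 : ∀ i, ContDiff ℝ 1 (fun y => V y i))
    (hInt : ∀ i, Integrable (fun y => V y i))
    (hpos : ∀ x, 0 ≤ V x (Fin.last n))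
    (a : ℝ)
    (hdiv : ∀ x, a < x (Fin.last n) →
      ∑ i, fderiv ℝ (fun y => V y i) x (Pi.single i 1) = 0) :
    ∀ x, x (Fin.last n) = a → V x (Fin.last n) = 0 := by
  intro x hx
  set l := Fin.last n with hl
  set f : ℝ → ℝ := fun t => V (x + t • (Pi.single l 1 : Fin (n+1) → ℝ)) l with hfdef
  have hfc : Continuous f :=
    ((hC1 l).continuous).comp (continuous_const.add (continuous_id.smul continuous_const))
  have hf0 : ∀ t ∈ Ioi (0:ℝ), f t = 0 := by
    intro t ht
    refine core_halfspace n V hC1 hInt hpos a hdiv _ ?_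
    have : (x + t • (Pi.single l 1 : Fin (n+1) → ℝ)) l = a + t := by
      simp [hx]
    rw [this]
    simpa using ht
  have h1 : Filter.Tendsto f (nhdsWithin 0 (Ioi 0)) (nhds (f 0)) :=
    (hfc.continuousAt).continuousWithinAt
  have h2 : Filter.Tendsto f (nhdsWithin 0 (Ioi 0)) (nhds 0) := by
    refine Filter.Tendsto.congr' ?_ tendsto_const_nhds
    exact (eventually_nhdsWithin_of_forall fun t ht => (hf0 t ht).symm)
  have := tendsto_nhds_unique h1 h2
  simpa [hfdef] using this

open MeasureTheory Set ENNReal Matrix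

/-- Step 1 of the support theorem: a `C¹`, integrable, pointwise positive
semidefinite stress field whose divergence vanishes on an open half-space
has vanishing normal traction `S m` on the bounding hyperplane. -/
theorem traction_vanishes_on_hyperplane (d : ℕ) (hd : 1 ≤ d)
    (S : EuclideanSpace ℝ (Fin d) → Matrix (Fin d) (Fin d) ℝ)
    (hC1 : ∀ i j : Fin d, ContDiff ℝ 1 (fun y => S y i j))
    (hsym : ∀ x, (S x).IsSymm)
    (hpsd : ∀ x, (S x).PosSemidef)
    (hint : ∀ i j : Fin d,
      MeasureTheory.Integrable (fun y : EuclideanSpace ℝ (Fin d) => S y i j))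
    (m : EuclideanSpace ℝ (Fin d)) (hm : ‖m‖ = 1) (a : ℝ)
    (hdiv : ∀ x : EuclideanSpace ℝ (Fin d), ⟪x, m⟫_ℝ > a → ∀ i : Fin d,
      ∑ j, (fderiv ℝ (fun y => S y i j) x) (EuclideanSpace.single j 1) = 0) :
    ∀ x : EuclideanSpace ℝ (Fin d), ⟪x, m⟫_ℝ = a → ∀ i : Fin d,
      ∑ j, S x i j * m j = 0 := by
  obtain ⟨n, rfl⟩ : ∃ n, d = n + 1 := ⟨d - 1, (Nat.succ_pred_eq_of_pos hd).symm⟩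
  classical
  set u : Fin (n+1) → EuclideanSpace ℝ (Fin (n+1)) :=
    fun i => EuclideanSpace.single i (1:ℝ) with hudef
  set Φ : EuclideanSpace ℝ (Fin (n+1)) ≃ₗᵢ[ℝ] EuclideanSpace ℝ (Fin (n+1)) :=
    Submodule.reflection (ℝ ∙ (u (Fin.last n) - m))ᗮ with hΦdef
  have hΦu : Φ (u (Fin.last n)) = m := Submodule.reflection_sub (by simp [hudef, hm])
  set b : Fin (n+1) → EuclideanSpace ℝ (Fin (n+1)) := fun i => Φ (u i) with hbdef
  set piCLE := PiLp.continuousLinearEquiv 2 ℝ (fun _ : Fin (n+1) => ℝ) with hpiCLE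
  set ψ : (Fin (n+1) → ℝ) →L[ℝ] EuclideanSpace ℝ (Fin (n+1)) :=
    ((Φ.toContinuousLinearEquiv : EuclideanSpace ℝ (Fin (n+1)) ≃L[ℝ]
        EuclideanSpace ℝ (Fin (n+1))) : EuclideanSpace ℝ (Fin (n+1)) →L[ℝ]
        EuclideanSpace ℝ (Fin (n+1))).comp
      ((piCLE.symm : (Fin (n+1) → ℝ) ≃L[ℝ] EuclideanSpace ℝ (Fin (n+1))) :
        (Fin (n+1) → ℝ) →L[ℝ] EuclideanSpace ℝ (Fin (n+1))) with hψdef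
  have hψapp : ∀ p, ψ p = Φ (piCLE.symm p) := fun p => rfl
  have hψsingle : ∀ i : Fin (n+1), ψ (Pi.single i 1) = b i := by
    intro i
    rw [hψapp, hbdef]
    rfl
  have hMP : MeasurePreserving (fun p => ψ p) volume volume := by
    have h1 := (Φ.measurePreserving).comp
      ((EuclideanSpace.volume_preserving_symm_measurableEquiv_toLp (Fin (n+1))).symm)
    convert h1 using 1
    all_goals rfl
  -- the conjugated field
  set g : Fin (n+1) → EuclideanSpace ℝ (Fin (n+1)) → ℝ :=
    fun k x => ∑ j, S x k j * m j with hgdef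
  have hgC1 : ∀ k, ContDiff ℝ 1 (g k) :=
    fun k => ContDiff.sum fun j _ => (hC1 k j).mul contDiff_const
  set V : (Fin (n+1) → ℝ) → (Fin (n+1) → ℝ) :=
    fun p i => ∑ k, g k (ψ p) * b i k with hVdef
  have hC1V : ∀ i, ContDiff ℝ 1 (fun p => V p i) :=
    fun i => ContDiff.sum fun k _ => ((hgC1 k).comp ψ.contDiff).mul contDiff_const
  have hIntV : ∀ i, Integrable (fun p => V p i) := by
    intro i
    refine integrable_finset_sum _ fun k _ => Integrable.mul_const ?_ _
    refine integrable_finset_sum _ fun j _ => Integrable.mul_const ?_ _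
    exact (hMP.integrable_comp (hC1 k j).continuous.aestronglyMeasurable).mpr (hint k j)
  have hblast : b (Fin.last n) = m := by rw [hbdef]; exact hΦu
  have hposV : ∀ p, 0 ≤ V p (Fin.last n) := by
    intro p
    have h1 := (hpsd (ψ p)).dotProduct_mulVec_nonneg (fun j => m j)
    rw [hVdef]
    simp only [hblast]
    have : ∑ k, g k (ψ p) * m k
        = dotProduct (star fun j => m j) ((S (ψ p)) *ᵥ fun j => m j) := by
      simp [dotProduct, Matrix.mulVec, hgdef, mul_comm]
    rw [this]
    exact h1
  -- basis decomposition of functionals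
  have hdecomp : ∀ (L : EuclideanSpace ℝ (Fin (n+1)) →L[ℝ] ℝ)
      (z : EuclideanSpace ℝ (Fin (n+1))), L z = ∑ r, z r * L (u r) := by
    intro L z
    conv_lhs => rw [← (EuclideanSpace.basisFun (Fin (n+1)) ℝ).sum_repr z]
    rw [map_sum]
    refine Finset.sum_congr rfl fun r _ => ?_
    rw [EuclideanSpace.basisFun_repr, EuclideanSpace.basisFun_apply, _root_.map_smul,
      smul_eq_mul, hudef]
  have hbapp : ∀ (i r : Fin (n+1)), b i r = (Φ.symm (u r)) i := by
    intro i r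
    have h1 : b i r = ⟪b i, u r⟫_ℝ := by
      rw [hudef]
      rw [EuclideanSpace.inner_single_right]
      simp
    have h2 : (Φ.symm (u r)) i = ⟪Φ.symm (u r), u i⟫_ℝ := by
      rw [hudef]
      rw [EuclideanSpace.inner_single_right]
      simp
    rw [h1, h2]
    have h3 : ⟪Φ.symm (u r), u i⟫_ℝ = ⟪u r, Φ (u i)⟫_ℝ := by
      rw [← Φ.inner_map_map (Φ.symm (u r)) (u i), Φ.apply_symm_apply]
    rw [h3]
    simp only [hbdef]
    exact real_inner_comm _ _
  have horth : ∀ r k : Fin (n+1), (∑ i, b i r * b i k) = if r = k then (1:ℝ) else 0 := by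
    intro r k
    have h1 : (∑ i, b i r * b i k) = ⟪Φ.symm (u r), Φ.symm (u k)⟫_ℝ := by
      rw [PiLp.inner_apply]
      refine Finset.sum_congr rfl fun i _ => ?_
      rw [hbapp, hbapp]
      simp [RCLike.inner_apply]
      ring
    rw [h1, Φ.symm.inner_map_map, hudef, EuclideanSpace.inner_single_left]
    simp [EuclideanSpace.single_apply]
  -- divergence transfer
  have hdivV : ∀ p, a < p (Fin.last n) →
      ∑ i, fderiv ℝ (fun q => V q i) p (Pi.single i 1) = 0 := by
    intro p hp
    set x := ψ p with hxdef
    have hxm : ⟪x, m⟫_ℝ = p (Fin.last n) := by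
      rw [hxdef, hψapp, ← hΦu, Φ.inner_map_map, hudef, EuclideanSpace.inner_single_right]
      simp
      rfl
    have hxgt : ⟪x, m⟫_ℝ > a := by rw [hxm]; exact hp
    set Dg : Fin (n+1) → EuclideanSpace ℝ (Fin (n+1)) →L[ℝ] ℝ :=
      fun k => fderiv ℝ (g k) x with hDgdef
    have hstep1 : ∀ i : Fin (n+1),
        fderiv ℝ (fun q => V q i) p (Pi.single i 1) = ∑ k, Dg k (b i) * b i k := by
      intro i
      have hterm : ∀ k : Fin (n+1),
          HasFDerivAt (fun q => g k (ψ q) * b i k) ((b i k) • ((Dg k).comp ψ)) p := by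
        intro k
        exact ((((hgC1 k).differentiable one_ne_zero) x).hasFDerivAt.comp p
          ψ.hasFDerivAt).mul_const (b i k)
      have hsum : HasFDerivAt (fun q => V q i)
          (∑ k, (b i k) • ((Dg k).comp ψ)) p := by
        rw [hVdef]
        exact HasFDerivAt.fun_sum fun k _ => hterm k
      rw [hsum.fderiv]
      rw [ContinuousLinearMap.sum_apply]
      refine Finset.sum_congr rfl fun k _ => ?_
      rw [ContinuousLinearMap.smul_apply, ContinuousLinearMap.comp_apply, hψsingle,
        smul_eq_mul, mul_comm]
    have hstep2 : (∑ i, ∑ k, Dg k (b i) * b i k) = ∑ k, Dg k (u k) := by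
      have h1 : ∀ i k : Fin (n+1), Dg k (b i) * b i k
          = ∑ r, Dg k (u r) * (b i r * b i k) := by
        intro i k
        rw [hdecomp (Dg k) (b i), Finset.sum_mul]
        refine Finset.sum_congr rfl fun r _ => ?_
        ring
      calc (∑ i, ∑ k, Dg k (b i) * b i k)
          = ∑ k, ∑ i, Dg k (b i) * b i k := Finset.sum_comm
        _ = ∑ k, ∑ i, ∑ r, Dg k (u r) * (b i r * b i k) := by
            refine Finset.sum_congr rfl fun k _ => Finset.sum_congr rfl fun i _ => h1 i k
        _ = ∑ k, ∑ r, Dg k (u r) * (∑ i, b i r * b i k) := by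
            refine Finset.sum_congr rfl fun k _ => ?_
            rw [Finset.sum_comm]
            refine Finset.sum_congr rfl fun r _ => ?_
            rw [Finset.mul_sum]
        _ = ∑ k, Dg k (u k) := by
            refine Finset.sum_congr rfl fun k _ => ?_
            simp only [horth, mul_ite, mul_one, mul_zero]
            simp [Finset.sum_ite_eq, Finset.mem_univ]
    have hstep3 : (∑ k, Dg k (u k)) = 0 := by
      have hgder : ∀ k, Dg k = ∑ j, m j • fderiv ℝ (fun y => S y k j) x := by
        intro k
        have h2 : HasFDerivAt (g k) (∑ j, m j • fderiv ℝ (fun y => S y k j) x) x := by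
          rw [hgdef]
          exact HasFDerivAt.fun_sum fun j _ =>
            (((hC1 k j).differentiable one_ne_zero) x).hasFDerivAt.mul_const (m j)
        rw [hDgdef]
        exact h2.fderiv
      have hsymf : ∀ k j : Fin (n+1), (fun y => S y k j) = fun y => S y j k := by
        intro k j
        funext y
        have := congrFun (congrFun (hsym y) k) j
        simpa [Matrix.transpose_apply] using this.symm
      calc (∑ k, Dg k (u k))
          = ∑ k, ∑ j, m j * (fderiv ℝ (fun y => S y k j) x) (u k) := by
            refine Finset.sum_congr rfl fun k _ => ?_
            rw [hgder k, ContinuousLinearMap.sum_apply]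
            refine Finset.sum_congr rfl fun j _ => ?_
            rw [ContinuousLinearMap.smul_apply, smul_eq_mul]
        _ = ∑ j, m j * ∑ k, (fderiv ℝ (fun y => S y j k) x) (u k) := by
            rw [Finset.sum_comm]
            refine Finset.sum_congr rfl fun j _ => ?_
            rw [Finset.mul_sum]
            refine Finset.sum_congr rfl fun k _ => ?_
            rw [hsymf k j]
        _ = ∑ j, m j * 0 := by
            refine Finset.sum_congr rfl fun j _ => ?_
            rw [hdiv x hxgt j]
        _ = 0 := by simp
    calc ∑ i, fderiv ℝ (fun q => V q i) p (Pi.single i 1)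
        = ∑ i, ∑ k, Dg k (b i) * b i k := Finset.sum_congr rfl fun i _ => hstep1 i
      _ = ∑ k, Dg k (u k) := hstep2
      _ = 0 := hstep3
  -- conclusion
  intro x hxa i
  set p : Fin (n+1) → ℝ := fun k => (Φ.symm x) k with hpdef
  have hψp : ψ p = x := by
    rw [hψapp]
    have h1 : piCLE.symm p = Φ.symm x := rfl
    rw [h1, Φ.apply_symm_apply]
  have hpl : p (Fin.last n) = a := by
    rw [hpdef]
    have h1 : (Φ.symm x) (Fin.last n) = ⟪Φ.symm x, u (Fin.last n)⟫_ℝ := by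
      rw [hudef, EuclideanSpace.inner_single_right]; simp
    have h2 : ⟪Φ.symm x, u (Fin.last n)⟫_ℝ = ⟪x, m⟫_ℝ := by
      rw [← hΦu, ← Φ.inner_map_map (Φ.symm x) (u (Fin.last n)), Φ.apply_symm_apply]
    simp only [h1, h2, hxa]
  have hV0 : V p (Fin.last n) = 0 :=
    core_boundary n V hC1V hIntV (fun q => hposV q) a hdivV p hpl
  have hdot : dotProduct (star fun j => m j) ((S x) *ᵥ fun j => m j) = 0 := by
    rw [← hV0, hVdef]
    simp only [hblast, hψp]
    simp [dotProduct, Matrix.mulVec, hgdef, mul_comm]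
  have hmv : (S x) *ᵥ (fun j => m j) = 0 :=
    ((hpsd x).dotProduct_mulVec_zero_iff _).mp hdot
  have := congrFun hmv i
  simpa [Matrix.mulVec, dotProduct] using this
end

section
/- Let S : EuclideanSpace ℝ (Fin d) → Matrix (Fin d) (Fin d) ℝ be a continuously differentiable matrix field whose value at every point is symmetric and positive semidefinite, with every entry Lebesgue-integrable over EuclideanSpace ℝ (Fin d). Let K be a compact convex subset of EuclideanSpace ℝ (Fin d), and suppose the divergence of S vanishes at every point outside K, i.e., for every x ∉ K and every i, ∑ j, (fderiv ℝ (fun y => S y i j) x) (EuclideanSpace.single j 1) = 0. Then S x = 0 for every x ∉ K. (Smooth version of: the support of an equilibrated positive semidefinite stress is contained in the convex hull of the support of the loading.) -/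
/-!
Fix a direction `n` and a level `c` with `⟪n, y⟫ ≤ c` on `K`, and a monotone step `η` vanishing
below `c`. Testing `div S = 0` against `n ⊗ η(⟪n, y⟫) χ(ε • y)`, with `χ` a bump, only involves
points outside `K`, and integration by parts gives
`∫ χ(ε • y) η'(⟪n, y⟫) nᵀ S(y) n = O(ε)` because `S` is integrable. Letting `ε → 0`, the
continuous nonnegative function `η'(⟪n, y⟫) nᵀ S(y) n` has integral zero, so `nᵀ S(x) n = 0`,
i.e. `S(x) n = 0`, wherever `η'(⟪n, x⟫) > 0`. For `x ∉ K` the directions `n` strictly separating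
`x` from `K` form a nonempty open set (Hahn–Banach), so they span and `S(x) = 0`.
-/

open MeasureTheory Filter Topology Real
open scoped RealInnerProductSpace Matrix

lemma hasCompactSupport_deriv_smoothTransition : HasCompactSupport (deriv smoothTransition) := by
  refine HasCompactSupport.intro (isCompact_Icc (a := 0) (b := 1)) fun t ht => ?_
  rcases lt_or_ge t 0 with h | h
  · have : smoothTransition =ᶠ[𝓝 t] fun _ => 0 :=
      (eventually_lt_nhds h).mono fun s hs => smoothTransition.zero_of_nonpos hs.le
    exact this.deriv_eq.trans (deriv_const t 0)
  · have h1 : 1 < t := lt_of_not_ge fun h' => ht ⟨h, h'⟩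
    have : smoothTransition =ᶠ[𝓝 t] fun _ => 1 :=
      (eventually_gt_nhds h1).mono fun s hs => smoothTransition.one_of_one_le hs.le
    exact this.deriv_eq.trans (deriv_const t 1)

lemma exists_contDiff_step_deriv_pos {c t₀ : ℝ} (h : c < t₀) :
    ∃ η : ℝ → ℝ, ContDiff ℝ 1 η ∧ (∀ t, |η t| ≤ 1) ∧ (∃ M, ∀ t, |deriv η t| ≤ M) ∧
      (∀ t, 0 ≤ deriv η t) ∧ (∀ t ≤ c, η t = 0) ∧ 0 < deriv η t₀ := by
  have hψ : ContDiff ℝ 1 smoothTransition := smoothTransition.contDiff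
  -- rescale `smoothTransition` so that `t₀` lands on a point where its slope is `1`
  obtain ⟨ξ, ⟨hξ0, -⟩, hξ⟩ := exists_deriv_eq_slope smoothTransition zero_lt_one
    smoothTransition.continuous.continuousOn (hψ.differentiable one_ne_zero).differentiableOn
  rw [smoothTransition.one, smoothTransition.zero, sub_zero, div_one] at hξ
  set a := ξ / (t₀ - c) with ha_def
  have ha : 0 < a := div_pos hξ0 (sub_pos.2 h)
  have hderiv : ∀ t, HasDerivAt (fun t => smoothTransition (a * (t - c)))
      (deriv smoothTransition (a * (t - c)) * a) t := fun t =>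
    (hψ.differentiable one_ne_zero _).hasDerivAt.comp t
      (((hasDerivAt_id t).sub_const c).const_mul a |>.congr_deriv (mul_one a))
  obtain ⟨M, hM⟩ := (hψ.continuous_deriv le_rfl).bounded_above_of_compact_support
    hasCompactSupport_deriv_smoothTransition
  refine ⟨fun t => smoothTransition (a * (t - c)),
    hψ.comp (contDiff_const.mul (contDiff_id.sub contDiff_const)),
    fun t => abs_le.2
      ⟨by linarith [smoothTransition.nonneg (a * (t - c))], smoothTransition.le_one _⟩,
    ⟨M * a, fun t => ?_⟩, fun t => ?_, fun t ht => smoothTransition.zero_of_nonpos ?_, ?_⟩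
  · rw [(hderiv t).deriv, abs_mul, abs_of_pos ha]
    exact mul_le_mul_of_nonneg_right (hM _) ha.le
  · rw [(hderiv t).deriv]
    exact mul_nonneg smoothTransition.monotone.deriv_nonneg ha.le
  · exact mul_nonpos_of_nonneg_of_nonpos ha.le (sub_nonpos.2 ht)
  · rw [(hderiv t₀).deriv, ha_def, div_mul_cancel₀ _ (sub_pos.2 h).ne', hξ, one_mul]
    exact ha

section Divergence

variable {d : ℕ}

noncomputable def divergence (w : Fin d → EuclideanSpace ℝ (Fin d) → ℝ)
    (y : EuclideanSpace ℝ (Fin d)) : ℝ :=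
  ∑ j, fderiv ℝ (w j) y (EuclideanSpace.single j 1)

lemma integral_sum_fderiv_mul_eq_zero {φ : EuclideanSpace ℝ (Fin d) → ℝ} (hφ : ContDiff ℝ 1 φ)
    (hφc : HasCompactSupport φ) {w : Fin d → EuclideanSpace ℝ (Fin d) → ℝ}
    (hw : ∀ j, ContDiff ℝ 1 (w j)) (hdiv : ∀ y, φ y ≠ 0 → divergence w y = 0) :
    ∫ y, ∑ j, fderiv ℝ φ y (EuclideanSpace.single j 1) * w j y = 0 := by
  have hD : ∀ {f : EuclideanSpace ℝ (Fin d) → ℝ}, ContDiff ℝ 1 f → ∀ v,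
      Continuous fun y => fderiv ℝ f y v := fun hf v =>
    (hf.continuous_fderiv one_ne_zero).clm_apply continuous_const
  have hint : ∀ j, Integrable fun y => fderiv ℝ φ y (EuclideanSpace.single j 1) * w j y := fun j =>
    ((hD hφ _).mul (hw j).continuous).integrable_of_hasCompactSupport
      (hφc.fderiv_apply ℝ _).mul_right
  have hint' : ∀ j, Integrable fun y => φ y * fderiv ℝ (w j) y (EuclideanSpace.single j 1) :=
    fun j => (hφ.continuous.mul (hD (hw j) _)).integrable_of_hasCompactSupport hφc.mul_right
  have ibp : ∀ j, ∫ y, φ y * fderiv ℝ (w j) y (EuclideanSpace.single j 1) =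
      -∫ y, fderiv ℝ φ y (EuclideanSpace.single j 1) * w j y := fun j =>
    integral_mul_fderiv_eq_neg_fderiv_mul_of_integrable (hint j) (hint' j)
      ((hφ.continuous.mul (hw j).continuous).integrable_of_hasCompactSupport hφc.mul_right)
      (fun y _ => hφ.differentiable one_ne_zero y) (fun y _ => (hw j).differentiable one_ne_zero y)
  have hzero : ∀ y, φ y * divergence w y = 0 := fun y => by
    by_cases h : φ y = 0
    · rw [h, zero_mul]
    · rw [hdiv y h, mul_zero]
  calc ∫ y, ∑ j, fderiv ℝ φ y (EuclideanSpace.single j 1) * w j y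
      = -∑ j, ∫ y, φ y * fderiv ℝ (w j) y (EuclideanSpace.single j 1) := by
        simp only [ibp, Finset.sum_neg_distrib, neg_neg]
        exact integral_finsetSum _ fun j _ => hint j
    _ = -∫ y, φ y * divergence w y := by
        simp only [divergence, Finset.mul_sum]
        rw [integral_finsetSum _ fun j _ => hint' j]
    _ = 0 := by simp [hzero]

lemma fderiv_comp_inner_mul_comp_smul_apply {F : Type*} [NormedAddCommGroup F]
    [InnerProductSpace ℝ F] {η : ℝ → ℝ} (hη : Differentiable ℝ η) {χ : F → ℝ}
    (hχ : Differentiable ℝ χ) (n y v : F) (ε : ℝ) :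
    fderiv ℝ (fun y => η ⟪n, y⟫ * χ (ε • y)) y v =
      χ (ε • y) * (deriv η ⟪n, y⟫ * ⟪n, v⟫) + ε * (η ⟪n, y⟫ * fderiv ℝ χ (ε • y) v) := by
  have h1 := (hη _).hasDerivAt.comp_hasFDerivAt y (innerSL ℝ n).hasFDerivAt
  have h2 := (hχ _).hasFDerivAt.comp y ((hasFDerivAt_id y).const_smul ε)
  have h : HasFDerivAt (fun y => η ⟪n, y⟫ * χ (ε • y)) _ y := h1.mul h2
  rw [h.fderiv]
  simp only [coe_innerSL_apply, Function.comp_apply, Pi.smul_apply, id_eq,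
    ContinuousLinearMap.comp_smulₛₗ, ringHom_apply, ContinuousLinearMap.comp_id, add_apply,
    smul_apply, smul_eq_mul]
  ring

lemma integral_cutoff_mul_flux_eq {w : Fin d → EuclideanSpace ℝ (Fin d) → ℝ}
    (hw : ∀ j, ContDiff ℝ 1 (w j)) {η : ℝ → ℝ} (hη : ContDiff ℝ 1 η)
    {n : EuclideanSpace ℝ (Fin d)} (hdiv : ∀ y, η ⟪n, y⟫ ≠ 0 → divergence w y = 0)
    {χ : EuclideanSpace ℝ (Fin d) → ℝ} (hχ : ContDiff ℝ 1 χ) (hχc : HasCompactSupport χ)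
    {ε : ℝ} (hε : ε ≠ 0) :
    ∫ y, χ (ε • y) * (deriv η ⟪n, y⟫ * ∑ j, n j * w j y) =
      -(ε * ∫ y, η ⟪n, y⟫ * ∑ j, fderiv ℝ χ (ε • y) (EuclideanSpace.single j 1) * w j y) := by
  set φ : EuclideanSpace ℝ (Fin d) → ℝ := fun y => η ⟪n, y⟫ * χ (ε • y)
  have hinner : Continuous fun y : EuclideanSpace ℝ (Fin d) => ⟪n, y⟫ := (innerSL ℝ n).continuous
  have hwc : Continuous fun y => ∑ j, n j * w j y :=
    continuous_finsetSum _ fun j _ => continuous_const.mul (hw j).continuous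
  have hφ : ContDiff ℝ 1 φ :=
    (hη.comp (innerSL ℝ n).contDiff).mul (hχ.comp (contDiff_const_smul ε))
  have hφ' : ∀ y j, fderiv ℝ φ y (EuclideanSpace.single j 1) * w j y =
      χ (ε • y) * (deriv η ⟪n, y⟫ * (n j * w j y)) +
        ε * (η ⟪n, y⟫ * (fderiv ℝ χ (ε • y) (EuclideanSpace.single j 1) * w j y)) := by
    intro y j
    rw [fderiv_comp_inner_mul_comp_smul_apply (hη.differentiable one_ne_zero)
      (hχ.differentiable one_ne_zero), EuclideanSpace.inner_single_right]
    simp only [one_mul, ringHom_apply]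
    ring
  have hA : Integrable fun y => χ (ε • y) * (deriv η ⟪n, y⟫ * ∑ j, n j * w j y) :=
    ((hχ.continuous.comp (continuous_const_smul ε)).mul
      (((hη.continuous_deriv le_rfl).comp hinner).mul hwc)).integrable_of_hasCompactSupport
      (hχc.comp_smul hε).mul_right
  have hB : Integrable fun y =>
      η ⟪n, y⟫ * ∑ j, fderiv ℝ χ (ε • y) (EuclideanSpace.single j 1) * w j y := by
    refine Continuous.integrable_of_hasCompactSupport ?_ (((hχc.fderiv ℝ).comp_smul hε).mono ?_)
    · exact (hη.continuous.comp hinner).mul (continuous_finsetSum _ fun j _ =>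
        (((hχ.continuous_fderiv one_ne_zero).comp (continuous_const_smul ε)).clm_apply
          continuous_const).mul (hw j).continuous)
    · intro y hy
      contrapose! hy
      simp [Function.notMem_support.1 hy]
  have := integral_sum_fderiv_mul_eq_zero hφ ?_ hw ?_
  · simp only [hφ', Finset.sum_add_distrib, ← Finset.mul_sum] at this
    rw [integral_add hA (hB.const_mul ε), integral_const_mul] at this
    linarith
  · exact (hχc.comp_smul hε).mul_left
  · intro y hy
    exact hdiv y (left_ne_zero_of_mul hy)

lemma continuous_integral_comp_smul_mul {X : Type*} [NormedAddCommGroup X] [NormedSpace ℝ X]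
    [MeasurableSpace X] [OpensMeasurableSpace X] {μ : Measure X} {χ : X → ℝ} (hχ : Continuous χ)
    {M : ℝ} (hM : ∀ y, ‖χ y‖ ≤ M) {f : X → ℝ} (hf : Integrable f μ) :
    Continuous fun ε : ℝ => ∫ y, χ (ε • y) * f y ∂μ :=
  continuous_of_dominated
    (fun ε => (hχ.comp (continuous_const_smul ε)).aestronglyMeasurable.mul hf.aestronglyMeasurable)
    (fun ε => ae_of_all _ fun y => by
      rw [norm_mul]; exact mul_le_mul_of_nonneg_right (hM _) (norm_nonneg _))
    (hf.norm.const_mul M)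
    (ae_of_all _ fun y => (hχ.comp (continuous_id.smul continuous_const)).mul continuous_const)

lemma integrable_comp_inner_mul_sum {w : Fin d → EuclideanSpace ℝ (Fin d) → ℝ}
    (hwi : ∀ j, Integrable (w j)) {f : ℝ → ℝ} (hf : Continuous f) {M : ℝ} (hfb : ∀ t, |f t| ≤ M)
    (n : EuclideanSpace ℝ (Fin d)) : Integrable fun y => f ⟪n, y⟫ * ∑ j, n j * w j y :=
  (integrable_finsetSum _ fun j _ => (hwi j).const_mul (n j)).bdd_mul
    (hf.comp (innerSL ℝ n).continuous).aestronglyMeasurable (ae_of_all _ fun _ => hfb _)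

lemma abs_integral_mul_sum_clm_apply_mul_le {w : Fin d → EuclideanSpace ℝ (Fin d) → ℝ}
    (hwi : ∀ j, Integrable (w j)) {a : EuclideanSpace ℝ (Fin d) → ℝ} {M : ℝ}
    (ha : ∀ y, |a y| ≤ M)
    {L : EuclideanSpace ℝ (Fin d) → EuclideanSpace ℝ (Fin d) →L[ℝ] ℝ} {C : ℝ}
    (hL : ∀ y, ‖L y‖ ≤ C) :
    |∫ y, a y * ∑ j, L y (EuclideanSpace.single j 1) * w j y| ≤
      M * (C * ∑ j, ∫ y, |w j y|) := by
  have hM : 0 ≤ M := (abs_nonneg _).trans (ha 0)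
  rw [← integral_finsetSum _ fun j _ => (hwi j).abs, ← integral_const_mul, ← integral_const_mul,
    ← Real.norm_eq_abs]
  refine norm_integral_le_of_norm_le
    (((integrable_finsetSum _ fun j _ => (hwi j).abs).const_mul C).const_mul M)
    (ae_of_all _ fun y => ?_)
  rw [Real.norm_eq_abs, abs_mul, Finset.mul_sum]
  refine mul_le_mul (ha y) ((Finset.abs_sum_le_sum_abs _ _).trans
    (Finset.sum_le_sum fun j _ => ?_)) (abs_nonneg _) hM
  rw [abs_mul]
  refine mul_le_mul_of_nonneg_right ?_ (abs_nonneg _)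
  calc |L y (EuclideanSpace.single j 1)|
      ≤ ‖L y‖ * ‖EuclideanSpace.single j (1 : ℝ)‖ := (L y).le_opNorm _
    _ ≤ C := by rw [PiLp.norm_single, norm_one, mul_one]; exact hL y

theorem integral_deriv_comp_inner_mul_eq_zero {w : Fin d → EuclideanSpace ℝ (Fin d) → ℝ}
    (hw : ∀ j, ContDiff ℝ 1 (w j)) (hwi : ∀ j, Integrable (w j)) {η : ℝ → ℝ}
    (hη : ContDiff ℝ 1 η) {M M' : ℝ} (hηb : ∀ t, |η t| ≤ M) (hη'b : ∀ t, |deriv η t| ≤ M')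
    {n : EuclideanSpace ℝ (Fin d)} (hdiv : ∀ y, η ⟪n, y⟫ ≠ 0 → divergence w y = 0) :
    ∫ y, deriv η ⟪n, y⟫ * ∑ j, n j * w j y = 0 := by
  let χ : ContDiffBump (0 : EuclideanSpace ℝ (Fin d)) := ⟨1, 2, one_pos, one_lt_two⟩
  have hχ : ContDiff ℝ 1 χ := χ.contDiff
  obtain ⟨C, hC⟩ := (hχ.continuous_fderiv one_ne_zero).bounded_above_of_compact_support
    (χ.hasCompactSupport.fderiv ℝ)
  set F := fun ε : ℝ => ∫ y, χ (ε • y) * (deriv η ⟪n, y⟫ * ∑ j, n j * w j y)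
  have hF : Continuous F := by
    refine continuous_integral_comp_smul_mul χ.continuous (M := 1) (fun y => ?_) ?_
    · rw [Real.norm_eq_abs, abs_of_nonneg χ.nonneg]; exact χ.le_one
    · exact integrable_comp_inner_mul_sum hwi (hη.continuous_deriv le_rfl) hη'b n
  set K := M * (C * ∑ j, ∫ y, |w j y|)
  have hbound : ∀ ε ≠ 0, |F ε| ≤ |ε| * K := by
    intro ε hε
    rw [show F ε = _ from integral_cutoff_mul_flux_eq hw hη hdiv hχ χ.hasCompactSupport hε, abs_neg,
      abs_mul]
    gcongr
    exact abs_integral_mul_sum_clm_apply_mul_le hwi (fun y => hηb _) (fun y => hC _)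
  have hlim : Tendsto F (𝓝[≠] 0) (𝓝 0) := by
    refine squeeze_zero_norm' (eventually_nhdsWithin_of_forall hbound) ?_
    simpa using ((continuous_abs.tendsto (0 : ℝ)).mul_const K).mono_left nhdsWithin_le_nhds
  have hF0 := tendsto_nhds_unique (hF.continuousAt.tendsto.mono_left nhdsWithin_le_nhds) hlim
  have hχ0 : χ 0 = 1 := χ.one_of_mem_closedBall (by simp [χ])
  simpa [F, hχ0] using hF0

theorem sum_mul_eq_zero_of_divergence_eq_zero {w : Fin d → EuclideanSpace ℝ (Fin d) → ℝ}
    (hw : ∀ j, ContDiff ℝ 1 (w j)) (hwi : ∀ j, Integrable (w j)) {n : EuclideanSpace ℝ (Fin d)}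
    {c : ℝ} (hdiv : ∀ y, c < ⟪n, y⟫ → divergence w y = 0) (hpos : ∀ y, 0 ≤ ∑ j, n j * w j y)
    {x : EuclideanSpace ℝ (Fin d)} (hx : c < ⟪n, x⟫) : ∑ j, n j * w j x = 0 := by
  obtain ⟨η, hη, hηb, ⟨M, hη'b⟩, hη'0, hηc, hη'x⟩ := exists_contDiff_step_deriv_pos hx
  have hflux := integral_deriv_comp_inner_mul_eq_zero hw hwi hη hηb hη'b (n := n)
    fun y hy => hdiv y (lt_of_not_ge fun h => hy (hηc _ h))
  have hg0 : 0 ≤ fun y => deriv η ⟪n, y⟫ * ∑ j, n j * w j y := fun y => mul_nonneg (hη'0 _) (hpos y)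
  have hgc : Continuous fun y => deriv η ⟪n, y⟫ * ∑ j, n j * w j y :=
    ((hη.continuous_deriv le_rfl).comp (innerSL ℝ n).continuous).mul
      (continuous_finsetSum _ fun j _ => continuous_const.mul (hw j).continuous)
  rw [integral_eq_zero_iff_of_nonneg hg0
    (integrable_comp_inner_mul_sum hwi (hη.continuous_deriv le_rfl) hη'b n),
    hgc.ae_eq_iff_eq volume continuous_zero] at hflux
  exact (mul_eq_zero.1 (congrFun hflux x)).resolve_left hη'x.ne'

lemma IsCompact.exists_forall_le_of_forall_lt {X : Type*} [TopologicalSpace X] {K : Set X}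
    (hK : IsCompact K) {f : X → ℝ} (hf : ContinuousOn f K) {a : ℝ} (h : ∀ y ∈ K, f y < a) :
    ∃ c < a, ∀ y ∈ K, f y ≤ c := by
  rcases K.eq_empty_or_nonempty with rfl | hne
  · exact ⟨a - 1, by linarith, by simp⟩
  · obtain ⟨y₀, hy₀, hmax⟩ := hK.exists_isMaxOn hne hf
    exact ⟨f y₀, h y₀ hy₀, hmax⟩

lemma divergence_sum_mul {ι : Type*} [Fintype ι] (a : ι → ℝ)
    {f : ι → Fin d → EuclideanSpace ℝ (Fin d) → ℝ} {y : EuclideanSpace ℝ (Fin d)}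
    (hf : ∀ i j, DifferentiableAt ℝ (f i j) y) :
    divergence (fun j y => ∑ i, a i * f i j y) y = ∑ i, a i * divergence (f i) y := by
  simp only [divergence, Finset.mul_sum]
  rw [Finset.sum_comm]
  refine Finset.sum_congr rfl fun j _ => ?_
  rw [fderiv_fun_sum fun i _ => (hf i j).const_mul (a i)]
  simp [fderiv_const_mul (hf _ j)]

lemma mulVec_eq_zero_of_forall_inner_lt (S : EuclideanSpace ℝ (Fin d) → Matrix (Fin d) (Fin d) ℝ)
    (hC1 : ∀ i j : Fin d, ContDiff ℝ 1 (fun y => S y i j)) (hpsd : ∀ x, (S x).PosSemidef)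
    (hint : ∀ i j : Fin d, Integrable (fun y => S y i j)) {K : Set (EuclideanSpace ℝ (Fin d))}
    (hK : IsCompact K) (hdiv : ∀ x ∉ K, ∀ i : Fin d, divergence (fun j y => S y i j) x = 0)
    {x n : EuclideanSpace ℝ (Fin d)} (hn : ∀ y ∈ K, ⟪n, y⟫ < ⟪n, x⟫) : S x *ᵥ n = 0 := by
  obtain ⟨c, hcx, hc⟩ := hK.exists_forall_le_of_forall_lt (innerSL ℝ n).continuous.continuousOn hn
  have hquad : ∀ y, ∑ j, n j * ∑ i, n i * S y i j = star ⇑n ⬝ᵥ S y *ᵥ n := by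
    intro y
    simp only [dotProduct, Matrix.mulVec, Finset.mul_sum, star_trivial]
    rw [Finset.sum_comm]
    exact Finset.sum_congr rfl fun i _ => Finset.sum_congr rfl fun j _ => by ring
  have hzero := sum_mul_eq_zero_of_divergence_eq_zero (w := fun j y => ∑ i, n i * S y i j)
    (fun j => ContDiff.sum fun i _ => contDiff_const.mul (hC1 i j))
    (fun j => integrable_finsetSum _ fun i _ => (hint i j).const_mul _)
    (fun y hy => by
      rw [divergence_sum_mul _ fun i j => (hC1 i j).differentiable one_ne_zero y,
        Finset.sum_eq_zero fun i _ => by rw [hdiv y (fun hyK => (hc y hyK).not_gt hy) i, mul_zero]])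
    (fun y => hquad y ▸ (hpsd y).dotProduct_mulVec_nonneg _) hcx
  exact ((hpsd x).dotProduct_mulVec_zero_iff _).1 (hquad x ▸ hzero)

lemma nonempty_interior_setOf_forall_inner_lt {F : Type*} [NormedAddCommGroup F]
    [InnerProductSpace ℝ F] [CompleteSpace F] {K : Set F} (hK : IsCompact K) (hKc : Convex ℝ K)
    {x : F} (hx : x ∉ K) : (interior {n : F | ∀ y ∈ K, ⟪n, y⟫ < ⟪n, x⟫}).Nonempty := by
  obtain ⟨f, u, hfK, hfx⟩ := geometric_hahn_banach_closed_point hKc hK.isClosed hx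
  set n₀ := (InnerProductSpace.toDual ℝ F).symm f
  have hn₀ : ∀ y, ⟪n₀, y⟫ = f y := fun y => InnerProductSpace.toDual_symm_apply
  refine ⟨n₀, mem_interior_iff_mem_nhds.2
    (hK.eventually_forall_of_forall_eventually fun y hy => ?_)⟩
  exact continuous_inner.continuousAt.eventually_lt
    (continuous_fst.inner continuous_const).continuousAt
    (by rw [hn₀, hn₀]; exact (hfK y hy).trans hfx)

end Divergence

theorem stress_supported_in_convex_hull_general (d : ℕ)
    (S : EuclideanSpace ℝ (Fin d) → Matrix (Fin d) (Fin d) ℝ)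
    (hC1 : ∀ i j : Fin d, ContDiff ℝ 1 (fun y => S y i j))
    (hpsd : ∀ x, (S x).PosSemidef)
    (hint : ∀ i j : Fin d,
      MeasureTheory.Integrable (fun y : EuclideanSpace ℝ (Fin d) => S y i j))
    (K : Set (EuclideanSpace ℝ (Fin d))) (hK : IsCompact K) (hKc : Convex ℝ K)
    (hdiv : ∀ x ∉ K, ∀ i : Fin d,
      ∑ j, (fderiv ℝ (fun y => S y i j) x) (EuclideanSpace.single j 1) = 0) :
    ∀ x ∉ K, S x = 0 := by
  intro x hx
  have hker : {n | ∀ y ∈ K, ⟪n, y⟫ < ⟪n, x⟫} ⊆ LinearMap.ker (Matrix.toLpLin 2 2 (S x)) :=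
    fun n hn => by
      simp [Matrix.toLpLin_apply, mulVec_eq_zero_of_forall_inner_lt S hC1 hpsd hint hK hdiv hn]
  have htop := Submodule.eq_top_of_nonempty_interior' _
    ((nonempty_interior_setOf_forall_inner_lt hK hKc hx).mono (interior_mono hker))
  exact (Matrix.toLpLin 2 2).injective (by simpa using LinearMap.ker_eq_top.1 htop)

/-- Smooth version of the support theorem: a `C¹`, integrable, pointwise
positive semidefinite stress field whose divergence vanishes outside a compact
convex set `K` vanishes identically outside `K`. -/
theorem stress_supported_in_convex_hull (d : ℕ) (hd : 1 ≤ d)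
    (S : EuclideanSpace ℝ (Fin d) → Matrix (Fin d) (Fin d) ℝ)
    (hC1 : ∀ i j : Fin d, ContDiff ℝ 1 (fun y => S y i j))
    (hsym : ∀ x, (S x).IsSymm)
    (hpsd : ∀ x, (S x).PosSemidef)
    (hint : ∀ i j : Fin d,
      MeasureTheory.Integrable (fun y : EuclideanSpace ℝ (Fin d) => S y i j))
    (K : Set (EuclideanSpace ℝ (Fin d))) (hK : IsCompact K) (hKc : Convex ℝ K)
    (hdiv : ∀ x ∉ K, ∀ i : Fin d,
      ∑ j, (fderiv ℝ (fun y => S y i j) x) (EuclideanSpace.single j 1) = 0) :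
    ∀ x ∉ K, S x = 0 :=
  stress_supported_in_convex_hull_general d S hC1 hpsd hint K hK hKc hdiv
end

section
/- Let x f : Fin N → EuclideanSpace ℝ (Fin d) and let λ : Fin N → Fin N → ℝ satisfy λ i j = λ j i for all i, j and the equilibrium conditions f i + ∑ j, (λ i j) • (x j − x i) = 0 for all i. Then ∑ i, ⟪f i, x i⟫ = (1/2) * ∑ i, ∑ j, λ i j * ‖x i − x j‖². (Discrete form of the identity ⟨F, x⟩ = ∫ Tr(S): the work of the loading against the identity displacement equals the total cost of the truss.) -/
open scoped InnerProductSpace BigOperators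

/-! Equilibrium rewrites `f i` as `∑ j, λ i j • (x i - x j)`, so the work is
`∑ i, ∑ j, λ i j * ⟪x i - x j, x i⟫`. Polarization splits `⟪a - b, a⟫` into `‖a - b‖² / 2` plus
`(‖a‖² - ‖b‖²) / 2`, and the second part cancels in the double sum because `λ` is symmetric. -/

section

variable {ι E : Type*} [Fintype ι]

theorem sum_sum_mul_sub_eq_zero_of_symm {lam : ι → ι → ℝ} (hsym : ∀ i j, lam i j = lam j i)
    (a : ι → ℝ) : ∑ i, ∑ j, lam i j * (a i - a j) = 0 := by
  have hswap : ∑ i, ∑ j, lam i j * (a i - a j) = -∑ i, ∑ j, lam i j * (a i - a j) := by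
    conv_lhs => rw [Finset.sum_comm]
    simp only [← Finset.sum_neg_distrib]
    refine Finset.sum_congr rfl fun i _ => Finset.sum_congr rfl fun j _ => ?_
    rw [hsym]
    ring
  linarith

theorem eq_sum_smul_sub_of_add_sum_smul_sub_eq_zero [AddCommGroup E] [Module ℝ E]
    {lam : ι → ι → ℝ} {x f : ι → E} {i : ι} (h : f i + ∑ j, lam i j • (x j - x i) = 0) :
    f i = ∑ j, lam i j • (x i - x j) := by
  rw [eq_neg_of_add_eq_zero_left h, ← Finset.sum_neg_distrib]
  simp only [← smul_neg, neg_sub]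

variable [NormedAddCommGroup E] [InnerProductSpace ℝ E]

theorem real_inner_sub_self_left (a b : E) :
    ⟪a - b, a⟫_ℝ = (‖a - b‖ ^ 2 + (‖a‖ ^ 2 - ‖b‖ ^ 2)) / 2 := by
  rw [norm_sub_sq_real, inner_sub_left, real_inner_self_eq_norm_sq, real_inner_comm]
  ring

theorem sum_sum_mul_inner_sub_self_of_symm {lam : ι → ι → ℝ} (hsym : ∀ i j, lam i j = lam j i)
    (x : ι → E) :
    ∑ i, ∑ j, lam i j * ⟪x i - x j, x i⟫_ℝ = (1 / 2) * ∑ i, ∑ j, lam i j * ‖x i - x j‖ ^ 2 := by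
  have hnorms := sum_sum_mul_sub_eq_zero_of_symm hsym fun i => ‖x i‖ ^ 2
  simp only [real_inner_sub_self_left, mul_add, add_div, Finset.sum_add_distrib, mul_div_assoc',
    ← Finset.sum_div, hnorms]
  ring

end

/-- Discrete form of the identity `⟨F, x⟩ = ∫ Tr(S)`: the work of the loading
against the identity displacement equals the total cost of the truss. -/
theorem work_eq_total_cost (d N : ℕ)
    (x f : Fin N → EuclideanSpace ℝ (Fin d))
    (lam : Fin N → Fin N → ℝ)
    (hsym : ∀ i j, lam i j = lam j i)
    (heq : ∀ i, f i + ∑ j, lam i j • (x j - x i) = 0) :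
    ∑ i, ⟪f i, x i⟫_ℝ = (1 / 2) * ∑ i, ∑ j, lam i j * ‖x i - x j‖ ^ 2 := by
  rw [← sum_sum_mul_inner_sub_self_of_symm hsym x]
  refine Finset.sum_congr rfl fun i _ => ?_
  rw [eq_sum_smul_sub_of_add_sum_smul_sub_eq_zero (heq i), sum_inner]
  simp only [real_inner_smul_left]
end

section
/- Let x f : Fin N → EuclideanSpace ℝ (Fin d). Suppose λ : Fin N → Fin N → ℝ is symmetric, nonnegative (λ i j = λ j i ≥ 0), and satisfies f i + ∑ j, (λ i j) • (x j − x i) = 0 for all i, and suppose μ : Fin N → Fin N → ℝ is symmetric (μ i j = μ j i, possibly of either sign) and satisfies f i + ∑ j, (μ i j) • (x j − x i) = 0 for all i. Then ∑ i, ∑ j, λ i j * ‖x i − x j‖² ≤ ∑ i, ∑ j, |μ i j| * ‖x i − x j‖². (Discrete Michell optimality: a truss all of whose bars are in tension minimizes the total cost among all equilibrated trusses on the same nodes supporting the same loading.) -/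
open scoped BigOperators RealInnerProductSpace

/-!
Taking the inner product of the equilibrium equation at node `i` with `x i` and summing
over `i` gives the virtual-work identity: for every symmetric stress `w` equilibrating `f`,
`∑ i j, w i j * ‖x i - x j‖ ^ 2 = 2 * ∑ i, ⟪f i, x i⟫`. The right-hand side does not depend on
the stress, so the cost of a tension-only stress equals this common value, which is at most
`∑ i j, |mu i j| * ‖x i - x j‖ ^ 2` for any other equilibrated stress `mu`.
-/

section VirtualWork

variable {ι E : Type*} [NormedAddCommGroup E] [InnerProductSpace ℝ E]

lemma mul_norm_sub_sq_eq_neg_add_of_symm (x : ι → E) {w : ι → ι → ℝ}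
    (hw : ∀ i j, w i j = w j i) (i j : ι) :
    w i j * ‖x i - x j‖ ^ 2
      = -(w i j * ⟪x j - x i, x i⟫ + w j i * ⟪x i - x j, x j⟫) := by
  rw [← real_inner_self_eq_norm_sq, ← hw i j]
  simp only [inner_sub_left, inner_sub_right, real_inner_comm (x i) (x j)]
  ring

variable [Fintype ι]

lemma sum_sum_mul_norm_sub_sq_eq (x : ι → E) {w : ι → ι → ℝ}
    (hw : ∀ i j, w i j = w j i) :
    ∑ i, ∑ j, w i j * ‖x i - x j‖ ^ 2
      = -2 * ∑ i, ⟪∑ j, w i j • (x j - x i), x i⟫ := by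
  simp only [mul_norm_sub_sq_eq_neg_add_of_symm x hw, Finset.sum_neg_distrib,
    Finset.sum_add_distrib, sum_inner, real_inner_smul_left]
  rw [Finset.sum_comm (f := fun i j => w j i * ⟪x i - x j, x j⟫)]
  ring

lemma sum_sum_mul_norm_sub_sq_eq_two_mul_sum_inner (x f : ι → E) {w : ι → ι → ℝ}
    (hw : ∀ i j, w i j = w j i) (heq : ∀ i, f i + ∑ j, w i j • (x j - x i) = 0) :
    ∑ i, ∑ j, w i j * ‖x i - x j‖ ^ 2 = 2 * ∑ i, ⟪f i, x i⟫ := by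
  have hload : ∀ i, ∑ j, w i j • (x j - x i) = -f i := fun i =>
    eq_neg_of_add_eq_zero_right (heq i)
  simp only [sum_sum_mul_norm_sub_sq_eq x hw, hload, inner_neg_left, Finset.sum_neg_distrib]
  ring

end VirtualWork

theorem michell_optimality_general (d N : ℕ)
    (x f : Fin N → EuclideanSpace ℝ (Fin d))
    (lam : Fin N → Fin N → ℝ)
    (hlam_sym : ∀ i j, lam i j = lam j i)
    (hlam_eq : ∀ i, f i + ∑ j, lam i j • (x j - x i) = 0)
    (mu : Fin N → Fin N → ℝ)
    (hmu_sym : ∀ i j, mu i j = mu j i)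
    (hmu_eq : ∀ i, f i + ∑ j, mu i j • (x j - x i) = 0) :
    ∑ i, ∑ j, lam i j * ‖x i - x j‖ ^ 2
      ≤ ∑ i, ∑ j, |mu i j| * ‖x i - x j‖ ^ 2 := by
  rw [sum_sum_mul_norm_sub_sq_eq_two_mul_sum_inner x f hlam_sym hlam_eq,
    ← sum_sum_mul_norm_sub_sq_eq_two_mul_sum_inner x f hmu_sym hmu_eq]
  gcongr with i _ j _
  exact le_abs_self (mu i j)

/-- Discrete Michell optimality: a truss all of whose bars are in tension
minimizes the total cost among all equilibrated trusses on the same nodes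
supporting the same loading. -/
theorem michell_optimality (d N : ℕ)
    (x f : Fin N → EuclideanSpace ℝ (Fin d))
    (lam : Fin N → Fin N → ℝ)
    (hlam_sym : ∀ i j, lam i j = lam j i)
    (hlam_nonneg : ∀ i j, 0 ≤ lam i j)
    (hlam_eq : ∀ i, f i + ∑ j, lam i j • (x j - x i) = 0)
    (mu : Fin N → Fin N → ℝ)
    (hmu_sym : ∀ i j, mu i j = mu j i)
    (hmu_eq : ∀ i, f i + ∑ j, mu i j • (x j - x i) = 0) :
    ∑ i, ∑ j, lam i j * ‖x i - x j‖ ^ 2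
      ≤ ∑ i, ∑ j, |mu i j| * ‖x i - x j‖ ^ 2 :=
  michell_optimality_general d N x f lam hlam_sym hlam_eq mu hmu_sym hmu_eq
end

section
/- Let x : Fin N → EuclideanSpace ℝ (Fin d) be pairwise distinct points and f : Fin N → EuclideanSpace ℝ (Fin d). Suppose λ : Fin N → Fin N → ℝ is symmetric, nonnegative, and satisfies f i + ∑ j, (λ i j) • (x j − x i) = 0 for all i, and suppose μ : Fin N → Fin N → ℝ is symmetric, satisfies f i + ∑ j, (μ i j) • (x j − x i) = 0 for all i, and achieves equality of costs: ∑ i, ∑ j, |μ i j| * ‖x i − x j‖² = ∑ i, ∑ j, λ i j * ‖x i − x j‖². Then μ i j ≥ 0 for all i ≠ j. (Discrete analogue of: any solution of the Michell problem for such a loading is positive semidefinite.) -/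
open Finset

/-! Two equilibrated stresses for the same loading have the same weighted sum
`∑ σ i j ‖x i - x j‖²`: pairing the equilibrium equations with the positions shows that
it equals the virtual work `2 ∑ ⟪f i, x i⟫` of the loading. Hence
`∑ |μ| ‖·‖² = ∑ μ ‖·‖²`, and as the bar lengths of distinct points are positive, every
`μ i j` with `i ≠ j` equals `|μ i j|`. -/

section VirtualWork

variable {ι E : Type*} [Fintype ι] [NormedAddCommGroup E] [InnerProductSpace ℝ E]

theorem sum_sum_mul_norm_sub_sq_eq_of_symm (x : ι → E) {σ : ι → ι → ℝ}
    (hσ : ∀ i j, σ i j = σ j i) :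
    ∑ i, ∑ j, σ i j * ‖x i - x j‖ ^ 2
      = -2 * ∑ i, inner ℝ (∑ j, σ i j • (x j - x i)) (x i) := by
  have hswap : ∑ i, ∑ j, σ i j * inner ℝ (x i - x j) (x j)
      = ∑ i, ∑ j, σ i j * inner ℝ (x j - x i) (x i) := by
    rw [Finset.sum_comm]
    simp only [hσ]
  have hsplit : ∀ i j, ‖x i - x j‖ ^ 2
      = -inner ℝ (x j - x i) (x i) - inner ℝ (x i - x j) (x j) := by
    intro i j
    rw [← real_inner_self_eq_norm_sq, inner_sub_right, ← inner_neg_left, neg_sub]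
  simp only [hsplit, mul_sub, mul_neg, sum_sub_distrib, sum_neg_distrib, hswap, sum_inner,
    real_inner_smul_left]
  ring

theorem sum_sum_mul_norm_sub_sq_eq_of_equilibrium (x f : ι → E) {σ : ι → ι → ℝ}
    (hσ : ∀ i j, σ i j = σ j i) (heq : ∀ i, f i + ∑ j, σ i j • (x j - x i) = 0) :
    ∑ i, ∑ j, σ i j * ‖x i - x j‖ ^ 2 = 2 * ∑ i, inner ℝ (f i) (x i) := by
  have hstress : ∀ i, ∑ j, σ i j • (x j - x i) = -f i :=
    fun i => eq_neg_of_add_eq_zero_right (heq i)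
  simp only [sum_sum_mul_norm_sub_sq_eq_of_symm x hσ, hstress, inner_neg_left, sum_neg_distrib]
  ring

end VirtualWork

theorem nonneg_of_sum_abs_mul_eq_sum_mul {ι : Type*} [Fintype ι] {a w : ι → ℝ}
    (hw : ∀ i, 0 ≤ w i) (h : ∑ i, |a i| * w i = ∑ i, a i * w i) {i : ι} (hi : w i ≠ 0) :
    0 ≤ a i := by
  have hterm : ∀ k ∈ univ, 0 ≤ (|a k| - a k) * w k :=
    fun k _ => mul_nonneg (sub_nonneg.mpr (le_abs_self _)) (hw k)
  have hsum : ∑ k, (|a k| - a k) * w k = 0 := by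
    simp only [sub_mul, sum_sub_distrib, h, sub_self]
  have hi_zero := (sum_eq_zero_iff_of_nonneg hterm).mp hsum i (mem_univ i)
  have : |a i| = a i := by
    linarith [(mul_eq_zero.mp hi_zero).resolve_right hi]
  exact abs_eq_self.mp this

theorem michell_solution_nonneg_general (d N : ℕ)
    (x : Fin N → EuclideanSpace ℝ (Fin d))
    (hx : Function.Injective x)
    (f : Fin N → EuclideanSpace ℝ (Fin d))
    (lam : Fin N → Fin N → ℝ)
    (hlam_sym : ∀ i j, lam i j = lam j i)
    (hlam_eq : ∀ i, f i + ∑ j, lam i j • (x j - x i) = 0)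
    (mu : Fin N → Fin N → ℝ)
    (hmu_sym : ∀ i j, mu i j = mu j i)
    (hmu_eq : ∀ i, f i + ∑ j, mu i j • (x j - x i) = 0)
    (hcost : ∑ i, ∑ j, |mu i j| * ‖x i - x j‖ ^ 2
      = ∑ i, ∑ j, lam i j * ‖x i - x j‖ ^ 2) :
    ∀ i j, i ≠ j → 0 ≤ mu i j := by
  intro i j hij
  have hwork : ∑ i, ∑ j, mu i j * ‖x i - x j‖ ^ 2
      = ∑ i, ∑ j, lam i j * ‖x i - x j‖ ^ 2 := by
    rw [sum_sum_mul_norm_sub_sq_eq_of_equilibrium x f hmu_sym hmu_eq,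
      sum_sum_mul_norm_sub_sq_eq_of_equilibrium x f hlam_sym hlam_eq]
  have hlength : ‖x i - x j‖ ^ 2 ≠ 0 :=
    pow_ne_zero 2 (norm_sub_pos_iff.mpr (hx.ne hij)).ne'
  refine nonneg_of_sum_abs_mul_eq_sum_mul (ι := Fin N × Fin N)
    (a := fun p => mu p.1 p.2) (w := fun p => ‖x p.1 - x p.2‖ ^ 2)
    (fun _ => sq_nonneg _) ?_ (i := (i, j)) hlength
  simp only [Fintype.sum_prod_type, hcost, hwork]

/-- Discrete analogue of: any solution of the Michell problem for a loading
supported by an all-tension truss is itself under tension. -/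
theorem michell_solution_nonneg (d N : ℕ)
    (x : Fin N → EuclideanSpace ℝ (Fin d))
    (hx : Function.Injective x)
    (f : Fin N → EuclideanSpace ℝ (Fin d))
    (lam : Fin N → Fin N → ℝ)
    (hlam_sym : ∀ i j, lam i j = lam j i)
    (hlam_nonneg : ∀ i j, 0 ≤ lam i j)
    (hlam_eq : ∀ i, f i + ∑ j, lam i j • (x j - x i) = 0)
    (mu : Fin N → Fin N → ℝ)
    (hmu_sym : ∀ i j, mu i j = mu j i)
    (hmu_eq : ∀ i, f i + ∑ j, mu i j • (x j - x i) = 0)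
    (hcost : ∑ i, ∑ j, |mu i j| * ‖x i - x j‖ ^ 2
      = ∑ i, ∑ j, lam i j * ‖x i - x j‖ ^ 2) :
    ∀ i j, i ≠ j → 0 ≤ mu i j :=
  michell_solution_nonneg_general d N x hx f lam hlam_sym hlam_eq mu hmu_sym hmu_eq hcost
end

section
/- Let x : Fin N → EuclideanSpace ℝ (Fin d) affinely span all of EuclideanSpace ℝ (Fin d) (affineSpan ℝ (Set.range x) = ⊤), and let u : Fin N → EuclideanSpace ℝ (Fin d) satisfy ⟪u i − u j, x i − x j⟫ = 0 for all i, j. Then u is the restriction of an infinitesimal rigid motion: there exist a ∈ EuclideanSpace ℝ (Fin d) and a linear map A : EuclideanSpace ℝ (Fin d) →ₗ[ℝ] EuclideanSpace ℝ (Fin d) with ⟪A v, w⟫ = −⟪v, A w⟫ for all v, w, such that u i = a + A (x i) for every i. -/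
open scoped InnerProductSpace

/-- If the points `x i` affinely span the whole space and the displacement `u`
activates all pairwise constraints as equalities, then `u` is the restriction
of an infinitesimal rigid motion `y ↦ a + A y` with `A` skew-symmetric. -/
theorem rigid_motion_of_all_constraints_active (d N : ℕ)
    (x u : Fin N → EuclideanSpace ℝ (Fin d))
    (hspan : affineSpan ℝ (Set.range x) = ⊤)
    (h : ∀ i j : Fin N, ⟪u i - u j, x i - x j⟫_ℝ = 0) :
    ∃ (a : EuclideanSpace ℝ (Fin d))
      (A : EuclideanSpace ℝ (Fin d) →ₗ[ℝ] EuclideanSpace ℝ (Fin d)),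
      (∀ v w, ⟪A v, w⟫_ℝ = -⟪v, A w⟫_ℝ) ∧
      (∀ i, u i = a + A (x i)) := by
  classical
  -- N must be positive since the affine span of the empty set is ⊥.
  rcases Nat.eq_zero_or_pos N with hN | hN
  · exfalso
    subst hN
    have h0 : (0 : EuclideanSpace ℝ (Fin d)) ∈ affineSpan ℝ (Set.range x) := by
      rw [hspan]; exact AffineSubspace.mem_top ℝ _ 0
    rw [Set.range_eq_empty x, AffineSubspace.span_empty] at h0
    exact AffineSubspace.notMem_bot ℝ _ _ h0
  have i0 : Fin N := ⟨0, hN⟩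
  set v : Fin N → EuclideanSpace ℝ (Fin d) := fun i => x i - x i0 with hv
  set w : Fin N → EuclideanSpace ℝ (Fin d) := fun i => u i - u i0 with hw
  -- basic inner product identity
  have hF : ∀ i j, ⟪u i, x j⟫_ℝ + ⟪u j, x i⟫_ℝ = ⟪u i, x i⟫_ℝ + ⟪u j, x j⟫_ℝ := by
    intro i j
    have := h i j
    simp only [inner_sub_left, inner_sub_right] at this
    linarith
  have skew : ∀ i j k l : Fin N,
      ⟪u i - u j, x k - x l⟫_ℝ + ⟪u k - u l, x i - x j⟫_ℝ = 0 := by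
    intro i j k l
    have h1 := hF i k; have h2 := hF i l; have h3 := hF j k; have h4 := hF j l
    simp only [inner_sub_left, inner_sub_right]
    linarith
  have hwv : ∀ i j, ⟪w i, v j⟫_ℝ = -⟪w j, v i⟫_ℝ := by
    intro i j
    have := skew i i0 j i0
    simp only [hv, hw] at *
    linarith
  -- span of the v i is everything
  have hvspan : Submodule.span ℝ (Set.range v) = ⊤ := by
    have h1 : vectorSpan ℝ (Set.range x) = ⊤ := by
      rw [← direction_affineSpan, hspan, AffineSubspace.direction_top]
    rw [vectorSpan_range_eq_span_range_vsub_right ℝ x i0] at h1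
    simpa [hv] using h1
  -- linear maps sending coefficients to combinations of v and w
  set T : (Fin N → ℝ) →ₗ[ℝ] EuclideanSpace ℝ (Fin d) :=
    { toFun := fun c => ∑ i, c i • v i
      map_add' := by
        intro c c'
        simp [add_smul, Finset.sum_add_distrib]
      map_smul' := by
        intro r c
        simp [smul_smul, Finset.smul_sum] } with hT
  set S : (Fin N → ℝ) →ₗ[ℝ] EuclideanSpace ℝ (Fin d) :=
    { toFun := fun c => ∑ i, c i • w i
      map_add' := by
        intro c c'
        simp [add_smul, Finset.sum_add_distrib]
      map_smul' := by
        intro r c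
        simp [smul_smul, Finset.smul_sum] } with hS
  have hTsingle : ∀ i, T (Pi.single i 1) = v i := by
    intro i
    simp [hT, Pi.single_apply, ite_smul]
  have hSsingle : ∀ i, S (Pi.single i 1) = w i := by
    intro i
    simp [hS, Pi.single_apply, ite_smul]
  have hTrange : LinearMap.range T = ⊤ := by
    rw [eq_top_iff, ← hvspan, Submodule.span_le]
    rintro _ ⟨i, rfl⟩
    exact ⟨Pi.single i 1, hTsingle i⟩
  have hTsurj : Function.Surjective T := LinearMap.range_eq_top.mp hTrange
  -- ker T ≤ ker S
  have hker : ∀ c, T c = 0 → S c = 0 := by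
    intro c hc
    have horth : ∀ k, ⟪S c, v k⟫_ℝ = 0 := by
      intro k
      have : ⟪S c, v k⟫_ℝ = -⟪w k, T c⟫_ℝ := by
        simp only [hS, hT, LinearMap.coe_mk, AddHom.coe_mk, sum_inner, inner_sum,
          inner_smul_left, inner_smul_right, RCLike.ofReal_real_eq_id, id, conj_trivial]
        rw [← Finset.sum_neg_distrib]
        refine Finset.sum_congr rfl fun i _ => ?_
        rw [hwv i k, real_inner_comm]
        ring
      rw [this, hc, inner_zero_right, neg_zero]
    have hall : ∀ y : EuclideanSpace ℝ (Fin d), ⟪S c, y⟫_ℝ = 0 := by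
      intro y
      have hy : y ∈ Submodule.span ℝ (Set.range v) := hvspan ▸ Submodule.mem_top
      induction hy using Submodule.span_induction with
      | mem z hz => obtain ⟨k, rfl⟩ := hz; exact horth k
      | zero => simp
      | add a b _ _ ha hb => rw [inner_add_right, ha, hb, add_zero]
      | smul r a _ ha => rw [inner_smul_right, ha, mul_zero]
    have := hall (S c)
    exact inner_self_eq_zero.mp this
  have hkerle : ∀ c c', T c = T c' → S c = S c' := by
    intro c c' hcc
    have : S (c - c') = 0 := hker _ (by rw [map_sub, hcc, sub_self])
    rw [map_sub, sub_eq_zero] at this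
    exact this
  -- construct A via a right inverse of T
  obtain ⟨g, hg⟩ := T.exists_rightInverse_of_surjective hTrange
  set A : EuclideanSpace ℝ (Fin d) →ₗ[ℝ] EuclideanSpace ℝ (Fin d) := S ∘ₗ g with hA
  have hAT : ∀ c, A (T c) = S c := by
    intro c
    have : T (g (T c)) = T c := by
      have := LinearMap.congr_fun hg (T c)
      simpa using this
    simpa [hA] using hkerle _ _ this
  have hAv : ∀ i, A (v i) = w i := by
    intro i
    rw [← hTsingle i, hAT, hSsingle]
  -- skewness
  have hskewA : ∀ y z : EuclideanSpace ℝ (Fin d), ⟪A y, z⟫_ℝ = -⟪y, A z⟫_ℝ := by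
    intro y z
    obtain ⟨c, rfl⟩ := hTsurj y
    obtain ⟨c', rfl⟩ := hTsurj z
    rw [hAT, hAT]
    have : ⟪S c, T c'⟫_ℝ + ⟪T c, S c'⟫_ℝ = 0 := by
      simp only [hS, hT, LinearMap.coe_mk, AddHom.coe_mk, sum_inner, inner_sum,
        inner_smul_left, inner_smul_right, RCLike.ofReal_real_eq_id, id, conj_trivial]
      rw [← Finset.sum_add_distrib]
      refine Finset.sum_eq_zero fun i _ => ?_
      rw [← mul_add, ← Finset.sum_add_distrib]
      rw [Finset.sum_eq_zero, mul_zero]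
      intro j _
      have he : ⟪v j, w i⟫_ℝ = -⟪w j, v i⟫_ℝ := by
        rw [real_inner_comm]
        exact hwv i j
      linear_combination c j * he
    linarith
  refine ⟨u i0 - A (x i0), A, hskewA, fun i => ?_⟩
  have h2 : A (x i) - A (x i0) = u i - u i0 := by
    rw [← map_sub]
    exact hAv i
  have h3 : u i = u i0 + (A (x i) - A (x i0)) := by rw [h2]; abel
  rw [h3]; abel
end

section
/- Let x : Fin N → EuclideanSpace ℝ (Fin d) affinely span all of EuclideanSpace ℝ (Fin d) (affineSpan ℝ (Set.range x) = ⊤). For i ≠ j define the elementary loading F^(i,j) : Fin N → EuclideanSpace ℝ (Fin d) by F^(i,j) i = x i − x j, F^(i,j) j = x j − x i, and F^(i,j) ℓ = 0 for ℓ ∉ {i, j}. Then (a) every F^(i,j) is a balanced loading: ∑ ℓ, F^(i,j) ℓ = 0 and ∑ ℓ, (⟪F^(i,j) ℓ, v⟫ * ⟪x ℓ, w⟫ − ⟪x ℓ, v⟫ * ⟪F^(i,j) ℓ, w⟫) = 0 for all v, w; and (b) a loading g : Fin N → EuclideanSpace ℝ (Fin d) lies in the real linear span of {F^(i,j) : i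 ≠ j} if and only if g is balanced, i.e., ∑ ℓ, g ℓ = 0 and ∑ ℓ, (⟪g ℓ, v⟫ * ⟪x ℓ, w⟫ − ⟪x ℓ, v⟫ * ⟪g ℓ, w⟫) = 0 for all v, w. (Equivalently: the cone of admissible loadings A*_X, generated by the F^(i,j), spans the space B_X of balanced loadings, hence has nonempty interior relative to B_X.) -/
open scoped InnerProductSpace BigOperators

/-!
A linear functional `g ↦ ∑ ℓ, ⟪φ ℓ, g ℓ⟫` kills every elementary loading iff
`⟪φ i - φ j, x i - x j⟫ = 0` for all `i, j`, i.e. iff `φ` is an infinitesimal motion of the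
complete bar framework on the points `x`. As the points affinely span the space, such a motion is
trivial: `φ ℓ = A (x ℓ) + b` with `A` skew. Force balance kills the translation part `b` and
torque balance kills the rotation part `A`, so every balanced loading is annihilated by all
functionals that annihilate the elementary loadings, and duality gives the span.
-/

section Loadings

variable {ι E : Type*} [Fintype ι] [NormedAddCommGroup E] [InnerProductSpace ℝ E]

def balancedLoadings (x : ι → E) : Submodule ℝ (ι → E) where
  carrier := {g | ∑ ℓ, g ℓ = 0 ∧
    ∀ v w : E, ∑ ℓ, (⟪g ℓ, v⟫_ℝ * ⟪x ℓ, w⟫_ℝ - ⟪x ℓ, v⟫_ℝ * ⟪g ℓ, w⟫_ℝ) = 0}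
  zero_mem' := by simp
  add_mem' := by
    rintro a b ⟨ha, ha'⟩ ⟨hb, hb'⟩
    refine ⟨by simp [Finset.sum_add_distrib, ha, hb], fun v w => ?_⟩
    simp only [Pi.add_apply, inner_add_left, add_mul, mul_add, add_sub_add_comm,
      Finset.sum_add_distrib, ha' v w, hb' v w, add_zero]
  smul_mem' := by
    rintro c a ⟨ha, ha'⟩
    refine ⟨by simp [← Finset.smul_sum, ha], fun v w => ?_⟩
    simp only [Pi.smul_apply, real_inner_smul_left]
    rw [← mul_zero c, ← ha' v w, Finset.mul_sum]
    congr! 1 with ℓ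
    ring

variable [DecidableEq ι]

def elementaryLoading (x : ι → E) (i j : ι) : ι → E :=
  Pi.single i (x i - x j) + Pi.single j (x j - x i)

def elementaryLoadings (x : ι → E) : Set (ι → E) :=
  {h | ∃ i j, i ≠ j ∧ h = elementaryLoading x i j}

omit [Fintype ι] [InnerProductSpace ℝ E] in
theorem elementaryLoading_apply (x : ι → E) (i j ℓ : ι) :
    elementaryLoading x i j ℓ = if ℓ = i then x i - x j else if ℓ = j then x j - x i else 0 := by
  by_cases hi : ℓ = i <;> by_cases hj : ℓ = j <;> simp_all [elementaryLoading]

theorem elementaryLoading_mem_balancedLoadings (x : ι → E) (i j : ι) :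
    elementaryLoading x i j ∈ balancedLoadings x := by
  refine ⟨by simp [elementaryLoading, Finset.sum_add_distrib], fun v w => ?_⟩
  rcases eq_or_ne i j with rfl | hij
  · simp [elementaryLoading]
  · rw [Fintype.sum_eq_add i j hij fun ℓ ⟨hi, hj⟩ => by simp [elementaryLoading, hi, hj]]
    simp [elementaryLoading, hij, hij.symm, inner_sub_left]
    ring

theorem span_elementaryLoadings_le_balancedLoadings (x : ι → E) :
    Submodule.span ℝ (elementaryLoadings x) ≤ balancedLoadings x :=
  Submodule.span_le.mpr fun _ ⟨i, j, _, h⟩ => h ▸ elementaryLoading_mem_balancedLoadings x i j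

end Loadings

section Rigidity

variable {ι E : Type*} [Fintype ι] [NormedAddCommGroup E] [InnerProductSpace ℝ E]

theorem exists_skew_map_of_inner_add_inner_eq_zero {u ψ : ι → E}
    (hu : Submodule.span ℝ (Set.range u) = ⊤) (hψ : ∀ i j, ⟪ψ i, u j⟫_ℝ + ⟪ψ j, u i⟫_ℝ = 0) :
    ∃ A : E →ₗ[ℝ] E, (∀ v w, ⟪A v, w⟫_ℝ = -⟪v, A w⟫_ℝ) ∧ ∀ ℓ, A (u ℓ) = ψ ℓ := by
  set Φ := Fintype.linearCombination ℝ u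
  set Ψ := Fintype.linearCombination ℝ ψ
  have hΦ : Function.Surjective Φ := by
    rw [← LinearMap.range_eq_top, Fintype.range_linearCombination, hu]
  have hΨΦ (c c' : ι → ℝ) : ⟪Ψ c, Φ c'⟫_ℝ = -⟪Φ c, Ψ c'⟫_ℝ := by
    simp only [Φ, Ψ, Fintype.linearCombination_apply, sum_inner, inner_sum, real_inner_smul_left,
      real_inner_smul_right]
    rw [eq_neg_iff_add_eq_zero, ← Finset.sum_add_distrib]
    refine Finset.sum_eq_zero fun i _ => ?_
    rw [← Finset.sum_add_distrib]
    refine Finset.sum_eq_zero fun j _ => ?_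
    rw [real_inner_comm (ψ i) (u j)]
    linear_combination (c' i * c j) * hψ j i
  have hker : LinearMap.ker Φ ≤ LinearMap.ker Ψ := by
    intro c hc
    obtain ⟨c', hc'⟩ := hΦ (Ψ c)
    have h := hΨΦ c c'
    rw [hc', LinearMap.mem_ker.mp hc, inner_zero_left, neg_zero] at h
    exact inner_self_eq_zero.mp h
  let A := (LinearMap.ker Φ).liftQ Ψ hker ∘ₗ (Φ.quotKerEquivOfSurjective hΦ).symm.toLinearMap
  have hA (c : ι → ℝ) : A (Φ c) = Ψ c := by simp [A]
  refine ⟨A, fun v w => ?_, fun ℓ => ?_⟩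
  · obtain ⟨c, rfl⟩ := hΦ v
    obtain ⟨c', rfl⟩ := hΦ w
    rw [hA, hA, hΨΦ]
  · classical
    simpa [Φ, Ψ] using hA (Pi.single ℓ 1)

theorem exists_skew_add_const_of_inner_sub_sub_eq_zero {x φ : ι → E}
    (hx : affineSpan ℝ (Set.range x) = ⊤) (hφ : ∀ i j, ⟪φ i - φ j, x i - x j⟫_ℝ = 0) :
    ∃ A : E →ₗ[ℝ] E, (∀ v w, ⟪A v, w⟫_ℝ = -⟪v, A w⟫_ℝ) ∧ ∃ b, ∀ ℓ, φ ℓ = A (x ℓ) + b := by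
  obtain ⟨i₀⟩ : Nonempty ι :=
    Set.range_nonempty_iff_nonempty.mp <| (affineSpan_nonempty (k := ℝ)).mp <| by
      rw [hx, AffineSubspace.top_coe]
      exact Set.univ_nonempty
  have hu : Submodule.span ℝ (Set.range fun ℓ => x ℓ - x i₀) = ⊤ := by
    rw [← AffineSubspace.direction_top ℝ E E, ← hx, direction_affineSpan,
      vectorSpan_range_eq_span_range_vsub_right ℝ x i₀]
    rfl
  obtain ⟨A, hA, hAu⟩ := exists_skew_map_of_inner_add_inner_eq_zero hu
    (ψ := fun ℓ => φ ℓ - φ i₀) fun i j => by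
      have hij := hφ i j
      have hi := hφ i i₀
      have hj := hφ j i₀
      simp only [inner_sub_left, inner_sub_right, real_inner_comm] at *
      linarith
  refine ⟨A, hA, φ i₀ - A (x i₀), fun ℓ => ?_⟩
  rw [← sub_add_cancel (φ ℓ) (φ i₀), ← hAu ℓ, map_sub]
  abel

theorem sum_inner_skew_apply_eq_zero [FiniteDimensional ℝ E] {x g : ι → E}
    (hg : ∀ v w : E, ∑ ℓ, (⟪g ℓ, v⟫_ℝ * ⟪x ℓ, w⟫_ℝ - ⟪x ℓ, v⟫_ℝ * ⟪g ℓ, w⟫_ℝ) = 0)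
    {A : E →ₗ[ℝ] E} (hA : ∀ v w, ⟪A v, w⟫_ℝ = -⟪v, A w⟫_ℝ) :
    ∑ ℓ, ⟪A (x ℓ), g ℓ⟫_ℝ = 0 := by
  let b := stdOrthonormalBasis ℝ E
  have hb (y z : E) : ∑ p, ⟪y, b p⟫_ℝ * ⟪z, A (b p)⟫_ℝ = ⟪A y, z⟫_ℝ := by
    rw [hA, ← b.sum_inner_mul_inner, ← Finset.sum_neg_distrib]
    congr! 1 with p
    rw [real_inner_comm (A z), hA]
    ring
  -- summed over an orthonormal basis `b`, the torque condition at `(b p, A (b p))` expresses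
  -- `∑ ℓ, ⟪A (x ℓ), g ℓ⟫` as its own negative
  have h := Finset.sum_eq_zero fun p (_ : p ∈ Finset.univ) => hg (b p) (A (b p))
  rw [Finset.sum_comm] at h
  simp only [Finset.sum_sub_distrib, hb, hA (g _), real_inner_comm (A (x _)) (g _),
    Finset.sum_neg_distrib] at h
  linarith

end Rigidity

section Duality

variable {ι E : Type*} [Fintype ι] [DecidableEq ι] [NormedAddCommGroup E] [InnerProductSpace ℝ E]
  [FiniteDimensional ℝ E]

theorem LinearMap.exists_sum_inner_repr (f : (ι → E) →ₗ[ℝ] ℝ) :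
    ∃ φ : ι → E, (∀ ℓ a, f (Pi.single ℓ a) = ⟪φ ℓ, a⟫_ℝ) ∧ ∀ g, f g = ∑ ℓ, ⟪φ ℓ, g ℓ⟫_ℝ := by
  let φ ℓ := (InnerProductSpace.toDual ℝ E).symm
    (f ∘ₗ LinearMap.single ℝ (fun _ => E) ℓ).toContinuousLinearMap
  have hφ (ℓ : ι) (a : E) : f (Pi.single ℓ a) = ⟪φ ℓ, a⟫_ℝ := by
    simp [φ, InnerProductSpace.toDual_symm_apply]
  refine ⟨φ, hφ, fun g => ?_⟩
  simp only [← hφ, ← map_sum, Finset.univ_sum_single]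

theorem balancedLoadings_le_span_elementaryLoadings {x : ι → E}
    (hx : affineSpan ℝ (Set.range x) = ⊤) :
    balancedLoadings x ≤ Submodule.span ℝ (elementaryLoadings x) := by
  intro g ⟨hforce, htorque⟩
  rw [← Subspace.forall_mem_dualAnnihilator_apply_eq_zero_iff]
  intro f hf
  rw [Submodule.mem_dualAnnihilator] at hf
  obtain ⟨φ, hφ, hfφ⟩ := f.exists_sum_inner_repr
  have hmotion (i j : ι) : ⟪φ i - φ j, x i - x j⟫_ℝ = 0 := by
    rcases eq_or_ne i j with rfl | hij
    · simp
    have h := hf _ (Submodule.subset_span ⟨i, j, hij, rfl⟩)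
    rw [elementaryLoading, map_add, hφ, hφ] at h
    simp only [inner_sub_left, inner_sub_right] at h ⊢
    linarith
  obtain ⟨A, hA, b, hφA⟩ := exists_skew_add_const_of_inner_sub_sub_eq_zero hx hmotion
  simp only [hfφ, hφA, inner_add_left, Finset.sum_add_distrib, ← inner_sum, hforce,
    inner_zero_right, sum_inner_skew_apply_eq_zero htorque hA, add_zero]

theorem span_elementaryLoadings_eq_balancedLoadings {x : ι → E}
    (hx : affineSpan ℝ (Set.range x) = ⊤) :
    Submodule.span ℝ (elementaryLoadings x) = balancedLoadings x :=
  le_antisymm (span_elementaryLoadings_le_balancedLoadings x)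
    (balancedLoadings_le_span_elementaryLoadings hx)

end Duality

/-- The elementary loadings `F^(i,j)` (a single wire in tension from `x i` to
`x j`) are balanced, and they linearly span exactly the space of balanced
loadings; hence the admissible loading cone has nonempty interior relative to
the space of balanced loadings. -/
theorem elementary_loadings_span_balanced (d N : ℕ)
    (x : Fin N → EuclideanSpace ℝ (Fin d))
    (hspan : affineSpan ℝ (Set.range x) = ⊤)
    (F : Fin N → Fin N → (Fin N → EuclideanSpace ℝ (Fin d)))
    (hF : ∀ i j ℓ : Fin N, F i j ℓ =
      if ℓ = i then x i - x j else if ℓ = j then x j - x i else 0) :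
    (∀ i j : Fin N, i ≠ j →
      (∑ ℓ, F i j ℓ = 0 ∧
        ∀ v w : EuclideanSpace ℝ (Fin d),
          ∑ ℓ, (⟪F i j ℓ, v⟫_ℝ * ⟪x ℓ, w⟫_ℝ - ⟪x ℓ, v⟫_ℝ * ⟪F i j ℓ, w⟫_ℝ) = 0)) ∧
    (∀ g : Fin N → EuclideanSpace ℝ (Fin d),
      g ∈ Submodule.span ℝ {h | ∃ i j : Fin N, i ≠ j ∧ h = F i j} ↔
      (∑ ℓ, g ℓ = 0 ∧
        ∀ v w : EuclideanSpace ℝ (Fin d),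
          ∑ ℓ, (⟪g ℓ, v⟫_ℝ * ⟪x ℓ, w⟫_ℝ - ⟪x ℓ, v⟫_ℝ * ⟪g ℓ, w⟫_ℝ) = 0)) := by
  obtain rfl : F = elementaryLoading x := by
    funext i j ℓ
    rw [hF, elementaryLoading_apply]
  exact ⟨fun i j _ => elementaryLoading_mem_balancedLoadings x i j,
    fun g => SetLike.ext_iff.mp (span_elementaryLoadings_eq_balancedLoadings hspan) g⟩
end

section
/- (Unstuck loadings) Let x : Fin N → EuclideanSpace ℝ (Fin d) be pairwise distinct points and let f : Fin N → EuclideanSpace ℝ (Fin d) be a balanced loading (∑ i, f i = 0 and ∑ i, (⟪f i, v⟫ * ⟪x i, w⟫ − ⟪x i, v⟫ * ⟪f i, w⟫) = 0 for all v, w). Suppose there exists α > 0 such that for every u : Fin N → EuclideanSpace ℝ (Fin d) that is balanced with respect to x (∑ i, u i = 0 and ∑ i, (⟪u i, v⟫ * ⟪x i, w⟫ − ⟪x i, v⟫ * ⟪u i, w⟫) = 0 for all v, w) and satisfies ⟪u i − u j, x i − x j⟫ ≥ 0 for all i, j, one has ∑ i, ⟪f i, u i⟫ ≥ α * ‖u‖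 (where ‖u‖² = ∑ i, ‖u i‖²). Then there exists ε > 0 such that for every t with 0 ≤ t < ε there exists β > 0 such that: f is balanced with respect to the shifted points y i = x i − t • f i, and for every u : Fin N → EuclideanSpace ℝ (Fin d) that is balanced with respect to y and satisfies ⟪u i − u j, y i − y j⟫ ≥ 0 for all i, j, one has ∑ i, ⟪f i, u i⟫ ≥ β * ‖u‖. -/
open scoped InnerProductSpace BigOperators

/-!
Pulling the points back to `y = x - t • f` perturbs the linear equations of balance by `O(t)`,
so a loading `u` in the admissible cone at `y` lies within `O(t) ‖u‖` of a loading `k₀` balanced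
at `x`. The cone inequalities `⟪k₀ i - k₀ j, x i - x j⟫ ≥ 0` then fail by at most `O(t) ‖u‖`, and
adding `O(t) ‖u‖` times the dilation about the centroid, which is balanced and raises each of
them by `‖x i - x j‖ ^ 2 > 0`, gives a loading `k` admissible at `x` with `‖k - u‖ = O(t) ‖u‖`.
Hence `⟪f, u⟫ ≥ ⟪f, k⟫ - ‖f‖ ‖k - u‖ ≥ α ‖k‖ - ‖f‖ ‖k - u‖ ≥ (α - O(t)) ‖u‖`.
-/

theorem exists_pos_le_dist_of_injective {ι α : Type*} [Finite ι] [MetricSpace α] {x : ι → α}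
    (hx : Function.Injective x) : ∃ δ > 0, ∀ i j, i ≠ j → δ ≤ dist (x i) (x j) := by
  rcases isEmpty_or_nonempty {p : ι × ι // p.1 ≠ p.2} with h | h
  · exact ⟨1, one_pos, fun i j hij => (h.false ⟨(i, j), hij⟩).elim⟩
  · obtain ⟨p, hp⟩ :=
      Finite.exists_min fun p : {p : ι × ι // p.1 ≠ p.2} => dist (x p.1.1) (x p.1.2)
    exact ⟨_, dist_pos.2 (hx.ne p.2), fun i j hij => hp ⟨(i, j), hij⟩⟩

theorem LinearMap.exists_mem_ker_norm_sub_le_of_apply_eq_smul {H V : Type*}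
    [NormedAddCommGroup H] [InnerProductSpace ℝ H] [FiniteDimensional ℝ H]
    [AddCommGroup V] [Module ℝ V]
    (T D : H →ₗ[ℝ] V) :
    ∃ K, 0 ≤ K ∧ ∀ (t : ℝ) (u : H), T u = t • D u →
      ∃ k ∈ LinearMap.ker T, ‖u - k‖ ≤ K * |t| * ‖u‖ := by
  set W := (LinearMap.ker T)ᗮ
  have hS : LinearMap.ker (T ∘ₗ W.subtype) = ⊥ := by
    rw [LinearMap.ker_comp, ← Submodule.disjoint_iff_comap_eq_bot]
    exact (Submodule.orthogonal_disjoint _).symm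
  obtain ⟨g, hg⟩ := (T ∘ₗ W.subtype).exists_leftInverse_of_injective hS
  set L := (W.subtype ∘ₗ g ∘ₗ D).toContinuousLinearMap
  refine ⟨‖L‖, norm_nonneg _, fun t u hu => ?_⟩
  obtain ⟨k, hk, q, hq, rfl⟩ := (LinearMap.ker T).exists_add_mem_mem_orthogonal u
  refine ⟨k, hk, ?_⟩
  -- `g` inverts `T` on `(ker T)ᗮ`, so the component `q` of `u` there is `g (T u) = t • g (D u)`
  have hq_eq : q = t • L (k + q) := by
    have hTq : T q = t • D (k + q) := by rw [← hu, map_add, LinearMap.mem_ker.1 hk, zero_add]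
    calc q = W.subtype (g (T q)) := (congrArg W.subtype (LinearMap.congr_fun hg ⟨q, hq⟩)).symm
      _ = t • L (k + q) := by rw [hTq, map_smul, map_smul]; rfl
  calc ‖k + q - k‖ = |t| * ‖L (k + q)‖ := by
        rw [add_sub_cancel_left]
        conv_lhs => rw [hq_eq]
        rw [norm_smul, Real.norm_eq_abs]
    _ ≤ |t| * (‖L‖ * ‖k + q‖) := by gcongr; exact L.le_opNorm _
    _ = ‖L‖ * |t| * ‖k + q‖ := by ring

theorem mul_norm_sub_le_inner_of_mul_norm_le_inner {F : Type*} [NormedAddCommGroup F]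
    [InnerProductSpace ℝ F] {α : ℝ} (hα : 0 ≤ α) {f k : F} (hk : α * ‖k‖ ≤ ⟪f, k⟫_ℝ) (u : F) :
    α * ‖u‖ - (α + ‖f‖) * ‖k - u‖ ≤ ⟪f, u⟫_ℝ := by
  have hku : ‖u‖ - ‖k - u‖ ≤ ‖k‖ := by
    linarith [norm_sub_norm_le u k, norm_sub_rev u k]
  have hf : ⟪f, k - u⟫_ℝ ≤ ‖f‖ * ‖k - u‖ := real_inner_le_norm _ _
  rw [inner_sub_right] at hf
  nlinarith [mul_le_mul_of_nonneg_left hku hα]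

theorem abs_inner_sub_apply_le {ι E : Type*} [Fintype ι] [NormedAddCommGroup E]
    [InnerProductSpace ℝ E] (a b : PiLp 2 fun _ : ι => E) (i j : ι) :
    |⟪a i - a j, b i - b j⟫_ℝ| ≤ 4 * ‖a‖ * ‖b‖ := by
  have h2 : ∀ c : PiLp 2 (fun _ : ι => E), ‖c i - c j‖ ≤ 2 * ‖c‖ := fun c => by
    linarith [norm_sub_le (c i) (c j), PiLp.norm_apply_le c i, PiLp.norm_apply_le c j]
  calc |⟪a i - a j, b i - b j⟫_ℝ| ≤ ‖a i - a j‖ * ‖b i - b j‖ := abs_real_inner_le_norm _ _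
    _ ≤ (2 * ‖a‖) * (2 * ‖b‖) := by gcongr <;> exact h2 _
    _ = 4 * ‖a‖ * ‖b‖ := by ring

section Balance

variable {ι E : Type*} [Fintype ι] [NormedAddCommGroup E] [InnerProductSpace ℝ E]

def IsBalanced (z u : ι → E) : Prop :=
  ∑ i, u i = 0 ∧
    ∀ v w : E, ∑ i, (⟪u i, v⟫_ℝ * ⟪z i, w⟫_ℝ - ⟪z i, v⟫_ℝ * ⟪u i, w⟫_ℝ) = 0

def admissibleCone (z : ι → E) : Set (PiLp 2 fun _ : ι => E) :=
  {u | IsBalanced z u ∧ ∀ i j, ⟪u i - u j, z i - z j⟫_ℝ ≥ 0}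

def momentMap (z : ι → E) : (PiLp 2 fun _ : ι => E) →ₗ[ℝ] E → E → ℝ where
  toFun u v w := ∑ i, (⟪u i, v⟫_ℝ * ⟪z i, w⟫_ℝ - ⟪z i, v⟫_ℝ * ⟪u i, w⟫_ℝ)
  map_add' u u' := by
    ext v w
    simp only [PiLp.add_apply, inner_add_left, Pi.add_apply, ← Finset.sum_add_distrib]
    exact Finset.sum_congr rfl fun i _ => by ring
  map_smul' r u := by
    ext v w
    simp only [PiLp.smul_apply, real_inner_smul_left, Pi.smul_apply, smul_eq_mul,
      RingHom.id_apply, Finset.mul_sum]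
    exact Finset.sum_congr rfl fun i _ => by ring

def balanceMap (z : ι → E) : (PiLp 2 fun _ : ι => E) →ₗ[ℝ] E × (E → E → ℝ) where
  toFun u := (∑ i, u i, momentMap z u)
  map_add' u u' := by simp [Finset.sum_add_distrib]
  map_smul' r u := by simp [Finset.smul_sum]

theorem balanceMap_eq_zero_iff (z : ι → E) (u : PiLp 2 fun _ : ι => E) :
    balanceMap z u = 0 ↔ IsBalanced z u := by
  simp [balanceMap, momentMap, IsBalanced, Prod.ext_iff, funext_iff]

theorem balanceMap_sub_smul (z w : ι → E) (t : ℝ) :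
    balanceMap (z - t • w) = balanceMap z - t • (LinearMap.inr ℝ E _ ∘ₗ momentMap w) := by
  ext u : 1
  refine Prod.ext (by simp [balanceMap]) ?_
  ext v w
  simp only [balanceMap, momentMap, LinearMap.coe_mk, AddHom.coe_mk, LinearMap.sub_apply,
    LinearMap.smul_apply, LinearMap.comp_apply, LinearMap.inr_apply, Prod.snd_sub, Prod.smul_snd,
    Pi.sub_apply, Pi.smul_apply, inner_sub_left, real_inner_smul_left, smul_eq_mul,
    Finset.mul_sum, ← Finset.sum_sub_distrib]
  exact Finset.sum_congr rfl fun i _ => by ring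

theorem IsBalanced.sub_smul_self {z u : ι → E} (h : IsBalanced z u) (t : ℝ) :
    IsBalanced (z - t • u) u := by
  refine ⟨h.1, fun v w => ?_⟩
  rw [← h.2 v w]
  refine Finset.sum_congr rfl fun i _ => ?_
  simp only [Pi.sub_apply, Pi.smul_apply, inner_sub_left, real_inner_smul_left]
  ring

/-- Dilation about the centroid `c`. -/
theorem exists_isBalanced_sub_const (z : ι → E) : ∃ c : E, IsBalanced z fun i => z i - c := by
  obtain ⟨c, hc⟩ : ∃ c : E, ∑ i, z i = (Fintype.card ι : ℝ) • c := by
    rcases isEmpty_or_nonempty ι with hι | hι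
    · exact ⟨0, by simp⟩
    · exact ⟨(Fintype.card ι : ℝ)⁻¹ • ∑ i, z i, by
        rw [smul_smul, mul_inv_cancel₀ (by positivity), one_smul]⟩
  refine ⟨c, by simp [Finset.sum_sub_distrib, hc, ← Nat.cast_smul_eq_nsmul ℝ], fun v w => ?_⟩
  calc _ = ⟪∑ i, z i, v⟫_ℝ * ⟪c, w⟫_ℝ - ⟪c, v⟫_ℝ * ⟪∑ i, z i, w⟫_ℝ := by
        simp only [sum_inner, Finset.sum_mul, Finset.mul_sum, ← Finset.sum_sub_distrib]
        exact Finset.sum_congr rfl fun i _ => by rw [inner_sub_left, inner_sub_left]; ring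
    _ = 0 := by rw [hc, real_inner_smul_left, real_inner_smul_left]; ring

theorem inner_sub_apply_ge_of_mem_admissibleCone_sub_smul {x f : ι → E} {t : ℝ} (ht : 0 ≤ t)
    {u : PiLp 2 fun _ : ι => E} (hu : u ∈ admissibleCone (x - t • f))
    (k : PiLp 2 fun _ : ι => E) (i j : ι) :
    ⟪k i - k j, x i - x j⟫_ℝ ≥
      -(4 * (t * ‖u‖ * ‖WithLp.toLp 2 f‖ + ‖u - k‖ * ‖WithLp.toLp 2 x‖)) := by
  have hsplit : ⟪k i - k j, x i - x j⟫_ℝ =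
      ⟪u i - u j, (x - t • f) i - (x - t • f) j⟫_ℝ + t * ⟪u i - u j, f i - f j⟫_ℝ
        - ⟪(u - k) i - (u - k) j, x i - x j⟫_ℝ := by
    simp only [Pi.sub_apply, Pi.smul_apply, PiLp.sub_apply, inner_sub_left, inner_sub_right,
      real_inner_smul_right]
    ring
  have hf := abs_inner_sub_apply_le u (WithLp.toLp 2 f) i j
  have hx := abs_inner_sub_apply_le (u - k) (WithLp.toLp 2 x) i j
  rw [hsplit]
  nlinarith [hu.2 i j, abs_le.1 hf, abs_le.1 hx]

theorem exists_mem_admissibleCone_near [FiniteDimensional ℝ E] {x : ι → E}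
    (hx : Function.Injective x) (f : ι → E) :
    ∃ K, 0 ≤ K ∧ ∀ t, 0 ≤ t → ∀ u ∈ admissibleCone (x - t • f),
      ∃ k ∈ admissibleCone x, ‖k - u‖ ≤ K * t * ‖u‖ := by
  obtain ⟨K₀, hK₀, hker⟩ := LinearMap.exists_mem_ker_norm_sub_le_of_apply_eq_smul
    (balanceMap x) (LinearMap.inr ℝ E _ ∘ₗ momentMap f)
  obtain ⟨δ, hδ, hsep⟩ := exists_pos_le_dist_of_injective hx
  obtain ⟨c, hc⟩ := exists_isBalanced_sub_const x
  set g : PiLp 2 (fun _ : ι => E) := WithLp.toLp 2 fun i => x i - c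
  set η := 4 * (‖WithLp.toLp 2 f‖ + K₀ * ‖WithLp.toLp 2 x‖)
  refine ⟨K₀ + η / δ ^ 2 * ‖g‖, by positivity, fun t ht u hu => ?_⟩
  obtain ⟨k₀, hk₀, hk₀u⟩ := hker t u <| by
    have h := (balanceMap_eq_zero_iff _ u).2 hu.1
    rwa [balanceMap_sub_smul, LinearMap.sub_apply, LinearMap.smul_apply, sub_eq_zero] at h
  rw [abs_of_nonneg ht] at hk₀u
  set s := t * ‖u‖ * η / δ ^ 2 with hs
  have hs0 : 0 ≤ s := by positivity
  refine ⟨k₀ + s • g, ⟨?_, fun i j => ?_⟩, ?_⟩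
  · rw [← balanceMap_eq_zero_iff, map_add, map_smul, LinearMap.mem_ker.1 hk₀,
      (balanceMap_eq_zero_iff x g).2 hc, smul_zero, add_zero]
  · rcases eq_or_ne i j with rfl | hij
    · simp
    have hk₀ij := inner_sub_apply_ge_of_mem_admissibleCone_sub_smul ht hu k₀ i j
    have hδij : δ ^ 2 ≤ ‖x i - x j‖ ^ 2 := by
      rw [← dist_eq_norm]; gcongr; exact hsep i j hij
    have hdiff : (k₀ + s • g) i - (k₀ + s • g) j = (k₀ i - k₀ j) + s • (x i - x j) := by
      simp only [g, PiLp.add_apply, PiLp.smul_apply]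
      module
    rw [hdiff, inner_add_left, real_inner_smul_left, real_inner_self_eq_norm_sq]
    have hη : s * ‖x i - x j‖ ^ 2 ≥ t * ‖u‖ * η := by
      rw [hs, div_mul_eq_mul_div, ge_iff_le, le_div_iff₀ (by positivity)]
      gcongr
    have hk₀u' : ‖u - k₀‖ * ‖WithLp.toLp 2 x‖ ≤ K₀ * t * ‖u‖ * ‖WithLp.toLp 2 x‖ := by gcongr
    linarith
  · calc ‖k₀ + s • g - u‖ ≤ ‖k₀ - u‖ + ‖s • g‖ := by
          rw [add_sub_right_comm]; exact norm_add_le _ _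
      _ = ‖u - k₀‖ + s * ‖g‖ := by rw [norm_sub_rev, norm_smul, Real.norm_of_nonneg hs0]
      _ ≤ K₀ * t * ‖u‖ + s * ‖g‖ := by gcongr
      _ = (K₀ + η / δ ^ 2 * ‖g‖) * t * ‖u‖ := by rw [hs]; ring

end Balance

/-- **Unstuck loadings**: a loading in the interior (relative to the balanced
subspace) of the admissible loading cone at `x` remains in the interior of the
admissible loading cone when each point `x i` is pulled back to
`x i - t • f i`, for all small `t ≥ 0`. -/
theorem interior_loading_unstuck (d N : ℕ)
    (x : Fin N → EuclideanSpace ℝ (Fin d)) (hx : Function.Injective x)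
    (f : Fin N → EuclideanSpace ℝ (Fin d))
    (hf_bal : ∑ i, f i = 0 ∧
      ∀ v w : EuclideanSpace ℝ (Fin d),
        ∑ i, (⟪f i, v⟫_ℝ * ⟪x i, w⟫_ℝ - ⟪x i, v⟫_ℝ * ⟪f i, w⟫_ℝ) = 0)
    (α : ℝ) (hα : 0 < α)
    (hint : ∀ u : Fin N → EuclideanSpace ℝ (Fin d),
      (∑ i, u i = 0 ∧
        ∀ v w : EuclideanSpace ℝ (Fin d),
          ∑ i, (⟪u i, v⟫_ℝ * ⟪x i, w⟫_ℝ - ⟪x i, v⟫_ℝ * ⟪u i, w⟫_ℝ) = 0) →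
      (∀ i j : Fin N, ⟪u i - u j, x i - x j⟫_ℝ ≥ 0) →
      ∑ i, ⟪f i, u i⟫_ℝ ≥ α * Real.sqrt (∑ i, ‖u i‖ ^ 2)) :
    ∃ ε > 0, ∀ t : ℝ, 0 ≤ t → t < ε →
      ∃ β > 0,
        ((∑ i, f i = 0 ∧
          ∀ v w : EuclideanSpace ℝ (Fin d),
            ∑ i, (⟪f i, v⟫_ℝ * ⟪x i - t • f i, w⟫_ℝ
              - ⟪x i - t • f i, v⟫_ℝ * ⟪f i, w⟫_ℝ) = 0) ∧
        ∀ u : Fin N → EuclideanSpace ℝ (Fin d),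
          (∑ i, u i = 0 ∧
            ∀ v w : EuclideanSpace ℝ (Fin d),
              ∑ i, (⟪u i, v⟫_ℝ * ⟪x i - t • f i, w⟫_ℝ
                - ⟪x i - t • f i, v⟫_ℝ * ⟪u i, w⟫_ℝ) = 0) →
          (∀ i j : Fin N,
            ⟪u i - u j, (x i - t • f i) - (x j - t • f j)⟫_ℝ ≥ 0) →
          ∑ i, ⟪f i, u i⟫_ℝ ≥ β * Real.sqrt (∑ i, ‖u i‖ ^ 2)) := by
  obtain ⟨K, hK, hnear⟩ := exists_mem_admissibleCone_near hx f
  set F := WithLp.toLp 2 f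
  refine ⟨α / (2 * (α + ‖F‖) * (K + 1)), by positivity, fun t ht htε => ?_⟩
  refine ⟨α / 2, half_pos hα, IsBalanced.sub_smul_self hf_bal t, fun u hu_bal hu_cone => ?_⟩
  obtain ⟨k, ⟨hk_bal, hk_cone⟩, hku⟩ := hnear t ht (WithLp.toLp 2 u) ⟨hu_bal, hu_cone⟩
  have hk : α * ‖k‖ ≤ ⟪F, k⟫_ℝ := by
    simpa only [PiLp.norm_eq_of_L2, PiLp.inner_apply] using hint k hk_bal hk_cone
  have hu := mul_norm_sub_le_inner_of_mul_norm_le_inner hα.le hk (WithLp.toLp 2 u)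
  have hαF : 0 ≤ α + ‖F‖ := by positivity
  have htK : (α + ‖F‖) * (K * t) ≤ α / 2 := by
    have := (lt_div_iff₀ (by positivity)).1 htε
    nlinarith [mul_nonneg hαF ht]
  have hFu : ⟪F, WithLp.toLp 2 u⟫_ℝ = ∑ i, ⟪f i, u i⟫_ℝ := PiLp.inner_apply _ _
  rw [← PiLp.norm_eq_of_L2 (WithLp.toLp 2 u), ge_iff_le, ← hFu]
  nlinarith [mul_le_mul_of_nonneg_left hku hαF, norm_nonneg (WithLp.toLp 2 u)]
end

section
/- (The five wires problem) In E = EuclideanSpace ℝ (Fin 3), let v₁, …, v₅ be unit vectors with v₁, v₂, v₃ linearly independent and v₅ = −v₄, and let T₁, …, T₅ > 0 satisfy the balance condition ∑_{i=1}^{5} Tᵢ • vᵢ = 0. Then there exist t₁, …, t₅ > 0 and strictly positive tensions τ₁₄, τ₂₄, τ₃₄, τ₁₅, τ₂₅, τ₃₅ such that, setting yᵢ = tᵢ • vᵢ, the points y₁, …, y₅ are pairwise distinct and each node is in equilibrium: for i = 1, 2, 3, Tᵢ • vᵢ + τᵢ₄ • (y₄ − yᵢ)/‖y₄ − yᵢ‖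 + τᵢ₅ • (y₅ − yᵢ)/‖y₅ − yᵢ‖ = 0; T₄ • v₄ + ∑_{i=1}^{3} τᵢ₄ • (yᵢ − y₄)/‖yᵢ − y₄‖ = 0; and T₅ • v₅ + ∑_{i=1}^{3} τᵢ₅ • (yᵢ − y₅)/‖yᵢ − y₅‖ = 0. -/
/-!
Keep the three independent wires as bars ending at `yᵢ = vᵢ`, put the two new nodes at
`y₄ = t • v₄` and `y₅ = t • (-v₄)` with `t = (T₄ + T₅) / (T₁ + T₂ + T₃)`, and let every bar
leaving `yᵢ` carry the tension `(Tᵢ / 2) · length`. Tensions proportional to lengths make the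
bar forces linear, `(Tᵢ / 2) • (yⱼ - yᵢ)`: at `yᵢ` the two bars pull with `-Tᵢ • vᵢ` in total,
and at `y₄`, `y₅` the forces cancel by the balance condition `∑ᵢ Tᵢ • vᵢ = (T₅ - T₄) • v₄`.
The same identity keeps `v₄` off every line `ℝ • vᵢ`, so the five nodes are distinct and all
tensions are positive.
-/

theorem LinearIndependent.eq_zero_of_smul_eq_smul_of_sum_eq {R M ι : Type*} [CommRing R]
    [NoZeroDivisors R] [AddCommGroup M] [Module R M] [Fintype ι] {v : ι → M}
    (hv : LinearIndependent R v) {T : ι → R} {w : M} {d r s : R} {i j : ι}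
    (hw : ∑ k, T k • v k = d • w) (hij : i ≠ j) (hTj : T j ≠ 0) (h : r • w = s • v i) :
    r = 0 := by
  classical
  have hcomb : ∑ k, (r * T k - if k = i then d * s else 0) • v k = 0 := by
    simp only [sub_smul, Finset.sum_sub_distrib, mul_smul, ← Finset.smul_sum, hw, ite_smul,
      zero_smul, Finset.sum_ite_eq', Finset.mem_univ, if_true, smul_comm r d, h]
    module
  simpa [hij.symm, hTj] using Fintype.linearIndependent_iff.mp hv _ hcomb j

theorem injective_nodes_of_linearIndependent {E : Type*} [AddCommGroup E] [Module ℝ E]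
    {v1 v2 v3 w : E} {T1 T2 T3 d t : ℝ} (hv : LinearIndependent ℝ ![v1, v2, v3])
    (hT1 : T1 ≠ 0) (hT2 : T2 ≠ 0) (hw : T1 • v1 + T2 • v2 + T3 • v3 = d • w) (ht : t ≠ 0) :
    Function.Injective ![v1, v2, v3, t • w, t • -w] := by
  have hsum : ∑ k, ![T1, T2, T3] k • ![v1, v2, v3] k = d • w := by
    simpa [Fin.sum_univ_three] using hw
  have off_line : ∀ {r s : ℝ} (i j : Fin 3), i ≠ j → ![T1, T2, T3] j ≠ 0 → r ≠ 0 →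
      r • w ≠ s • ![v1, v2, v3] i :=
    fun i j hij hTj hr h => hr (hv.eq_zero_of_smul_eq_smul_of_sum_eq hsum hij hTj h)
  have hw0 : w ≠ 0 := by simpa using off_line (r := 1) (s := 0) 0 1 (by decide) hT2 one_ne_zero
  have h12 : v1 ≠ v2 := hv.injective.ne (by decide : (0 : Fin 3) ≠ 1)
  have h13 : v1 ≠ v3 := hv.injective.ne (by decide : (0 : Fin 3) ≠ 2)
  have h23 : v2 ≠ v3 := hv.injective.ne (by decide : (1 : Fin 3) ≠ 2)
  have h14 : t • w ≠ v1 := by simpa using off_line (s := 1) 0 1 (by decide) hT2 ht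
  have h24 : t • w ≠ v2 := by simpa using off_line (s := 1) 1 0 (by decide) hT1 ht
  have h34 : t • w ≠ v3 := by simpa using off_line (s := 1) 2 0 (by decide) hT1 ht
  have h15 : t • -w ≠ v1 := by simpa using off_line (s := 1) 0 1 (by decide) hT2 (neg_ne_zero.2 ht)
  have h25 : t • -w ≠ v2 := by simpa using off_line (s := 1) 1 0 (by decide) hT1 (neg_ne_zero.2 ht)
  have h35 : t • -w ≠ v3 := by simpa using off_line (s := 1) 2 0 (by decide) hT1 (neg_ne_zero.2 ht)
  have h45 : t • w ≠ t • -w := by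
    rw [Ne, smul_right_inj ht, eq_neg_iff_add_eq_zero, ← two_smul ℝ, smul_eq_zero]
    simp [hw0]
  intro a b hab
  fin_cases a <;> fin_cases b <;> simp_all [eq_comm]

section BarForce

variable {F : Type*} [NormedAddCommGroup F] [NormedSpace ℝ F]

theorem mul_norm_smul_inv_norm_smul (c : ℝ) (x : F) : (c * ‖x‖) • (‖x‖⁻¹ • x) = c • x := by
  rw [mul_smul, ← NormedSpace.normalize, NormedSpace.norm_smul_normalize]

theorem mul_norm_sub_rev_smul_inv_norm_smul (c : ℝ) (x y : F) :
    (c * ‖y - x‖) • (‖x - y‖⁻¹ • (x - y)) = c • (x - y) := by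
  rw [norm_sub_rev, mul_norm_smul_inv_norm_smul]

end BarForce

theorem five_wires_problem_general
    (v1 v2 v3 v4 v5 : EuclideanSpace ℝ (Fin 3))
    (hindep : LinearIndependent ℝ ![v1, v2, v3])
    (h45 : v5 = -v4)
    (T1 T2 T3 T4 T5 : ℝ)
    (hT1 : 0 < T1) (hT2 : 0 < T2) (hT3 : 0 < T3) (hT4 : 0 < T4) (hT5 : 0 < T5)
    (hbal : T1 • v1 + T2 • v2 + T3 • v3 + T4 • v4 + T5 • v5 = 0) :
    ∃ t1 t2 t3 t4 t5 : ℝ,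
      0 < t1 ∧ 0 < t2 ∧ 0 < t3 ∧ 0 < t4 ∧ 0 < t5 ∧
      Function.Injective
        ![t1 • v1, t2 • v2, t3 • v3, t4 • v4, t5 • v5] ∧
      ∃ τ14 τ24 τ34 τ15 τ25 τ35 : ℝ,
        0 < τ14 ∧ 0 < τ24 ∧ 0 < τ34 ∧ 0 < τ15 ∧ 0 < τ25 ∧ 0 < τ35 ∧
        (T1 • v1
          + τ14 • (‖t4 • v4 - t1 • v1‖⁻¹ • (t4 • v4 - t1 • v1))
          + τ15 • (‖t5 • v5 - t1 • v1‖⁻¹ • (t5 • v5 - t1 • v1)) = 0) ∧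
        (T2 • v2
          + τ24 • (‖t4 • v4 - t2 • v2‖⁻¹ • (t4 • v4 - t2 • v2))
          + τ25 • (‖t5 • v5 - t2 • v2‖⁻¹ • (t5 • v5 - t2 • v2)) = 0) ∧
        (T3 • v3
          + τ34 • (‖t4 • v4 - t3 • v3‖⁻¹ • (t4 • v4 - t3 • v3))
          + τ35 • (‖t5 • v5 - t3 • v3‖⁻¹ • (t5 • v5 - t3 • v3)) = 0) ∧
        (T4 • v4
          + τ14 • (‖t1 • v1 - t4 • v4‖⁻¹ • (t1 • v1 - t4 • v4))
          + τ24 • (‖t2 • v2 - t4 • v4‖⁻¹ • (t2 • v2 - t4 • v4))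
          + τ34 • (‖t3 • v3 - t4 • v4‖⁻¹ • (t3 • v3 - t4 • v4)) = 0) ∧
        (T5 • v5
          + τ15 • (‖t1 • v1 - t5 • v5‖⁻¹ • (t1 • v1 - t5 • v5))
          + τ25 • (‖t2 • v2 - t5 • v5‖⁻¹ • (t2 • v2 - t5 • v5))
          + τ35 • (‖t3 • v3 - t5 • v5‖⁻¹ • (t3 • v3 - t5 • v5)) = 0) := by
  subst h45
  have hbal' : T1 • v1 + T2 • v2 + T3 • v3 = (T5 - T4) • v4 := by
    linear_combination (norm := module) hbal
  obtain ⟨t, ht, htS⟩ : ∃ t : ℝ, 0 < t ∧ t * (T1 + T2 + T3) = T4 + T5 :=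
    ⟨_, by positivity, div_mul_cancel₀ _ (by positivity)⟩
  have hinj := injective_nodes_of_linearIndependent hindep hT1.ne' hT2.ne' hbal' ht.ne'
  have hbar : ∀ i j : Fin 5, i ≠ j →
      0 < ‖![v1, v2, v3, t • v4, t • -v4] j - ![v1, v2, v3, t • v4, t • -v4] i‖ :=
    fun i j hij => norm_pos_iff.2 (sub_ne_zero.2 (hinj.ne hij.symm))
  refine ⟨1, 1, 1, t, t, one_pos, one_pos, one_pos, ht, ht, by simpa only [one_smul] using hinj,
    T1 / 2 * ‖t • v4 - v1‖, T2 / 2 * ‖t • v4 - v2‖, T3 / 2 * ‖t • v4 - v3‖,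
    T1 / 2 * ‖t • -v4 - v1‖, T2 / 2 * ‖t • -v4 - v2‖, T3 / 2 * ‖t • -v4 - v3‖,
    mul_pos (half_pos hT1) (hbar 0 3 (by decide)), mul_pos (half_pos hT2) (hbar 1 3 (by decide)),
    mul_pos (half_pos hT3) (hbar 2 3 (by decide)), mul_pos (half_pos hT1) (hbar 0 4 (by decide)),
    mul_pos (half_pos hT2) (hbar 1 4 (by decide)), mul_pos (half_pos hT3) (hbar 2 4 (by decide)),
    ?_⟩
  simp only [one_smul, mul_norm_smul_inv_norm_smul, mul_norm_sub_rev_smul_inv_norm_smul]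
  refine ⟨by module, by module, by module, ?_, ?_⟩
  · linear_combination (norm := module) (2⁻¹ : ℝ) • hbal' - ((2⁻¹ : ℝ) * htS) • v4
  · linear_combination (norm := module) (2⁻¹ : ℝ) • hbal' + ((2⁻¹ : ℝ) * htS) • v4

/-- **The five wires problem**: a junction of five wires under tension at the
origin, with directions `v₁, v₂, v₃` independent and `v₅ = -v₄`, can be
replaced by a localized web in which at most four wires meet at each node,
all bars under strictly positive tension. -/
theorem five_wires_problem
    (v1 v2 v3 v4 v5 : EuclideanSpace ℝ (Fin 3))
    (hv1 : ‖v1‖ = 1) (hv2 : ‖v2‖ = 1) (hv3 : ‖v3‖ = 1)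
    (hv4 : ‖v4‖ = 1) (hv5 : ‖v5‖ = 1)
    (hindep : LinearIndependent ℝ ![v1, v2, v3])
    (h45 : v5 = -v4)
    (T1 T2 T3 T4 T5 : ℝ)
    (hT1 : 0 < T1) (hT2 : 0 < T2) (hT3 : 0 < T3) (hT4 : 0 < T4) (hT5 : 0 < T5)
    (hbal : T1 • v1 + T2 • v2 + T3 • v3 + T4 • v4 + T5 • v5 = 0) :
    ∃ t1 t2 t3 t4 t5 : ℝ,
      0 < t1 ∧ 0 < t2 ∧ 0 < t3 ∧ 0 < t4 ∧ 0 < t5 ∧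
      Function.Injective
        ![t1 • v1, t2 • v2, t3 • v3, t4 • v4, t5 • v5] ∧
      ∃ τ14 τ24 τ34 τ15 τ25 τ35 : ℝ,
        0 < τ14 ∧ 0 < τ24 ∧ 0 < τ34 ∧ 0 < τ15 ∧ 0 < τ25 ∧ 0 < τ35 ∧
        (T1 • v1
          + τ14 • (‖t4 • v4 - t1 • v1‖⁻¹ • (t4 • v4 - t1 • v1))
          + τ15 • (‖t5 • v5 - t1 • v1‖⁻¹ • (t5 • v5 - t1 • v1)) = 0) ∧
        (T2 • v2
          + τ24 • (‖t4 • v4 - t2 • v2‖⁻¹ • (t4 • v4 - t2 • v2))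
          + τ25 • (‖t5 • v5 - t2 • v2‖⁻¹ • (t5 • v5 - t2 • v2)) = 0) ∧
        (T3 • v3
          + τ34 • (‖t4 • v4 - t3 • v3‖⁻¹ • (t4 • v4 - t3 • v3))
          + τ35 • (‖t5 • v5 - t3 • v3‖⁻¹ • (t5 • v5 - t3 • v3)) = 0) ∧
        (T4 • v4
          + τ14 • (‖t1 • v1 - t4 • v4‖⁻¹ • (t1 • v1 - t4 • v4))
          + τ24 • (‖t2 • v2 - t4 • v4‖⁻¹ • (t2 • v2 - t4 • v4))
          + τ34 • (‖t3 • v3 - t4 • v4‖⁻¹ • (t3 • v3 - t4 • v4)) = 0) ∧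
        (T5 • v5
          + τ15 • (‖t1 • v1 - t5 • v5‖⁻¹ • (t1 • v1 - t5 • v5))
          + τ25 • (‖t2 • v2 - t5 • v5‖⁻¹ • (t2 • v2 - t5 • v5))
          + τ35 • (‖t3 • v3 - t5 • v5‖⁻¹ • (t3 • v3 - t5 • v5)) = 0) :=
  five_wires_problem_general v1 v2 v3 v4 v5 hindep h45 T1 T2 T3 T4 T5 hT1 hT2 hT3 hT4 hT5 hbal
end

section
/- Let x₀ ∈ EuclideanSpace ℝ (Fin d), let x : Fin N → EuclideanSpace ℝ (Fin d), let c : Fin N → ℝ with c i > 0 for all i, and define the radial loading f i = c i • (x i − x₀). Assume the loading is balanced: ∑ i, f i = 0. Then the tension coefficients λ i j = (c i * c j) / (∑ k, c k) are nonnegative, symmetric, and satisfy the equilibrium conditions f i + ∑ j, (λ i j) • (x j − x i) = 0 for every i. (The web connecting the terminal points pairwise supports any balanced radial loading.) -/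
open scoped BigOperators

/-!
Balance of the radial loading says that `x₀` is the `c`-weighted barycentre of the points, so
for every `i` the pulls `c j • (x j - x i)` add up to `(∑ k, c k) • (x₀ - x i)`. Scaling the bar
`[x i, x j]` by `c i / ∑ k, c k` therefore turns the total pull at `x i` into `c i • (x₀ - x i)`,
which is exactly `-f i`.
-/

section Equilibrium

variable {ι K V : Type*} [Fintype ι] [Field K] [AddCommGroup V] [Module K V]

theorem sum_smul_sub_eq_sum_smul_sub_add (c : ι → K) (x : ι → V) (x₀ y : V) :
    ∑ j, c j • (x j - y) = ∑ j, c j • (x j - x₀) + (∑ j, c j) • (x₀ - y) := by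
  rw [Finset.sum_smul, ← Finset.sum_add_distrib]
  exact Finset.sum_congr rfl fun j _ => by rw [← smul_add, sub_add_sub_cancel]

theorem sum_smul_sub_eq_of_barycenter {c : ι → K} {x : ι → V} {x₀ : V}
    (hbal : ∑ j, c j • (x j - x₀) = 0) (y : V) :
    ∑ j, c j • (x j - y) = (∑ j, c j) • (x₀ - y) := by
  rw [sum_smul_sub_eq_sum_smul_sub_add c x x₀, hbal, zero_add]

theorem radial_load_add_sum_smul_sub_eq_zero {c : ι → K} {x : ι → V} {x₀ : V}
    (hS : ∑ k, c k ≠ 0) (hbal : ∑ j, c j • (x j - x₀) = 0) (i : ι) :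
    c i • (x i - x₀) + ∑ j, (c i * c j / ∑ k, c k) • (x j - x i) = 0 := by
  have hpull : ∑ j, (c i * c j / ∑ k, c k) • (x j - x i) = c i • (x₀ - x i) :=
    calc ∑ j, (c i * c j / ∑ k, c k) • (x j - x i)
        = (c i / ∑ k, c k) • ∑ j, c j • (x j - x i) := by
          rw [Finset.smul_sum]
          exact Finset.sum_congr rfl fun j _ => by rw [smul_smul, div_mul_eq_mul_div]
      _ = c i • (x₀ - x i) := by
          rw [sum_smul_sub_eq_of_barycenter hbal, smul_smul, div_mul_cancel₀ _ hS]
  rw [hpull, ← smul_add, sub_add_sub_cancel, sub_self, smul_zero]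

end Equilibrium

/-- The web connecting the terminal points pairwise supports any balanced
radial loading `f i = c i • (x i - x₀)`, with tension coefficients
`λ i j = c i * c j / ∑ k, c k`. -/
theorem pairwise_web_supports_radial_loading (d N : ℕ)
    (x₀ : EuclideanSpace ℝ (Fin d))
    (x : Fin N → EuclideanSpace ℝ (Fin d))
    (c : Fin N → ℝ) (hc : ∀ i, 0 < c i)
    (f : Fin N → EuclideanSpace ℝ (Fin d))
    (hf : ∀ i, f i = c i • (x i - x₀))
    (hbal : ∑ i, f i = 0) :
    (∀ i j : Fin N, 0 ≤ (c i * c j) / (∑ k, c k)) ∧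
    (∀ i j : Fin N, (c i * c j) / (∑ k, c k) = (c j * c i) / (∑ k, c k)) ∧
    (∀ i : Fin N,
      f i + ∑ j, ((c i * c j) / (∑ k, c k)) • (x j - x i) = 0) := by
  obtain rfl : f = fun i => c i • (x i - x₀) := funext hf
  have hS_nonneg : 0 ≤ ∑ k, c k := Finset.sum_nonneg fun k _ => (hc k).le
  refine ⟨fun i j => div_nonneg (mul_nonneg (hc i).le (hc j).le) hS_nonneg,
    fun i j => by rw [mul_comm], fun i => ?_⟩
  have hS : ∑ k, c k ≠ 0 :=
    (Finset.sum_pos (fun k _ => hc k) ⟨i, Finset.mem_univ i⟩).ne'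
  exact radial_load_add_sum_smul_sub_eq_zero hS hbal i
end
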